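/- arXiv:1405.4883 — 4 statements merged into one kernel-verified Lean document; each statement's English description precedes it below -/
import Mathlib

section
/- Let d ≥ 2 and let w assign a real weight w_e to every edge e of the surface code lattice. Let 𝒢 be the set of cycles g such that |g ∩ H^j| is even for every j = 1,…,d, and define Z(w) = Σ_{g ∈ 𝒢} Π_{e ∈ g} w_e. On the d-qubit space (ℂ²)^{⊗d} define, for each horizontal column H^j with edges e_1,…,e_d listed top to bottom, the operator Ĥ^j = G(w_{e_1}) ⊗ G(w_{e_2}) ⊗ ⋯ ⊗ G(w_{e_d}) where G(w) = !![1,0;0,w]; and for each vertical column V^j with edges e_1,…,e_{d−1} listed top to bottom, the operator V̂^j = Π_{i=1}^{d−1} (I + w_{e_i} X_i X_{i+1}) (the factors pairwise commute), where X_i is the Pauli matrix σ_x = !![0,1;1,0] acting on the i-th tensor factor. Let ψ_e = Σ_{x ∈ {0,1}^d, |x| even} |x⟩ be the (unnormalized) sum of all computational basis vectors of even Hamming weight. Then Z(w) = ⟨ψ_e| Ĥ^d V̂^{d−1} Ĥ^{d−1} ⋯ Ĥ^2 V̂^1 Ĥ^1 |ψ_e⟩. -/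
open scoped Classical

/-- Edges of the surface code lattice: `Sum.inl (j, i)` is the horizontal edge which is the
`i`-th edge (from the top) of the `j`-th horizontal column `H^j`; `Sum.inr (j, k)` is the
`k`-th edge (from the top) of the `j`-th vertical column `V^j` (all indices 1-based). -/
abbrev EdgeT : Type := (ℕ × ℕ) ⊕ (ℕ × ℕ)

/-- Horizontal edges: `H = {(j,i) : 1 ≤ j ≤ d, 1 ≤ i ≤ d}`. -/
def Hedges (d : ℕ) : Finset (ℕ × ℕ) := Finset.Icc 1 d ×ˢ Finset.Icc 1 d

/-- Vertical edges: `V = {(j,k) : 1 ≤ j ≤ d−1, 1 ≤ k ≤ d−1}`. -/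
def Vedges (d : ℕ) : Finset (ℕ × ℕ) := Finset.Icc 1 (d - 1) ×ˢ Finset.Icc 1 (d - 1)

/-- All edges `H ∪ V` of the distance-`d` surface code lattice. -/
def Edges (d : ℕ) : Finset EdgeT :=
  (Hedges d).map ⟨Sum.inl, Sum.inl_injective⟩ ∪ (Vedges d).map ⟨Sum.inr, Sum.inr_injective⟩

/-- Incidence of the site `(j, i)` (with `1 ≤ j ≤ d−1`, `1 ≤ i ≤ d`) with an edge:
the site is incident to the horizontal edges `(j, i) ∈ H^j` and `(j+1, i) ∈ H^{j+1}` and to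
the vertical edges `(j, i−1)` and `(j, i)` (those whose second coordinate is in range). -/
def Incident (site : ℕ × ℕ) (e : EdgeT) : Prop :=
  match e with
  | Sum.inl h => (h.1 = site.1 ∨ h.1 = site.1 + 1) ∧ h.2 = site.2
  | Sum.inr v => v.1 = site.1 ∧ (v.2 + 1 = site.2 ∨ v.2 = site.2)

/-- `g ⊆ H ∪ V` is a cycle iff every site is incident to an even number of edges of `g`. -/
def IsCycle (d : ℕ) (g : Finset EdgeT) : Prop :=
  g ⊆ Edges d ∧
    ∀ j ∈ Finset.Icc 1 (d - 1), ∀ i ∈ Finset.Icc 1 d,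
      Even (g.filter (fun e => Incident (j, i) e)).card

/-- The edge `e` is a horizontal edge belonging to the column `H^j`. -/
def InHCol (j : ℕ) (e : EdgeT) : Prop :=
  match e with
  | Sum.inl h => h.1 = j
  | Sum.inr _ => False

/-- `g` has even intersection with every horizontal column `H^1, …, H^d`. -/
def EvenHColumns (d : ℕ) (g : Finset EdgeT) : Prop :=
  ∀ j ∈ Finset.Icc 1 d, Even (g.filter (fun e => InHCol j e)).card

noncomputable def sigmaX : Matrix (Fin 2) (Fin 2) ℂ := !![0, 1; 1, 0]
noncomputable def sigmaY : Matrix (Fin 2) (Fin 2) ℂ := !![0, -Complex.I; Complex.I, 0]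
noncomputable def sigmaZ : Matrix (Fin 2) (Fin 2) ℂ := !![1, 0; 0, -1]

/-- The single-site operator `σ` applied to qubit `k` (0-based) of a chain of `d` qubits,
i.e. the tensor product `1 ⊗ ⋯ ⊗ σ ⊗ ⋯ ⊗ 1` with `σ` in the `k`-th slot, written entrywise. -/
noncomputable def pauliAtN (d : ℕ) (σ : Matrix (Fin 2) (Fin 2) ℂ) (k : ℕ) :
    Matrix (Fin d → Fin 2) (Fin d → Fin 2) ℂ :=
  fun x y => ∏ i : Fin d, if (i : ℕ) = k then σ (x i) (y i) else (if x i = y i then 1 else 0)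

/-- Jordan–Wigner Majorana operator `c_p` (`p` is 1-based):
`c_{2j-1} = Z_1 ⋯ Z_{j-1} X_j` and `c_{2j} = Z_1 ⋯ Z_{j-1} Y_j`. -/
noncomputable def majorana (d : ℕ) (p : ℕ) : Matrix (Fin d → Fin 2) (Fin d → Fin 2) ℂ :=
  (((List.range ((p + 1) / 2 - 1)).map (fun k => pauliAtN d sigmaZ k)).prod) *
    pauliAtN d (if p % 2 = 1 then sigmaX else sigmaY) ((p + 1) / 2 - 1)

/-- The standard Hermitian inner product on the `d`-qubit space. -/
noncomputable def qinner {d : ℕ} (φ ψ : (Fin d → Fin 2) → ℂ) : ℂ := ∑ x, star (φ x) * ψ x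

/-- The unnormalized even state `ψ_e = ∑_{|x| even} |x⟩` on `d` qubits. -/
noncomputable def psiE (d : ℕ) : (Fin d → Fin 2) → ℂ :=
  fun x => if Even (∑ i, (x i : ℕ)) then 1 else 0

/-- The operator `Ĥ^j = G(w_{e_1}) ⊗ ⋯ ⊗ G(w_{e_d})` associated to the horizontal column
`H^j` (edges listed top to bottom), where `G(w) = !![1,0;0,w]`; written entrywise. -/
noncomputable def Hop (d : ℕ) (w : EdgeT → ℝ) (j : ℕ) :
    Matrix (Fin d → Fin 2) (Fin d → Fin 2) ℂ :=
  fun x y => ∏ i : Fin d, (!![1, 0; 0, (w (Sum.inl (j, (i : ℕ) + 1)) : ℂ)]) (x i) (y i)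

/-- The operator `V̂^j = ∏_{i=1}^{d−1} (I + w_{e_i} X_i X_{i+1})` associated to the vertical
column `V^j` (edges listed top to bottom); the factors pairwise commute, and here they are
multiplied in the order `i = 1,…,d−1`. -/
noncomputable def Vop (d : ℕ) (w : EdgeT → ℝ) (j : ℕ) :
    Matrix (Fin d → Fin 2) (Fin d → Fin 2) ℂ :=
  (((List.range (d - 1)).map (fun i =>
      (1 : Matrix (Fin d → Fin 2) (Fin d → Fin 2) ℂ) +
        (w (Sum.inr (j, i + 1)) : ℂ) • (pauliAtN d sigmaX i * pauliAtN d sigmaX (i + 1)))).prod)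

/-- The circuit `Û = Ĥ^d V̂^{d−1} Ĥ^{d−1} ⋯ Ĥ^2 V̂^1 Ĥ^1`. -/
noncomputable def circuitU (d : ℕ) (w : EdgeT → ℝ) :
    Matrix (Fin d → Fin 2) (Fin d → Fin 2) ℂ :=
  Hop d w d * (((List.range (d - 1)).reverse.map (fun j => Vop d w (j + 1) * Hop d w (j + 1))).prod)

namespace SC
open Finset

def dvec (d k : ℕ) : Fin d → Fin 2 := fun i => if (i : ℕ) = k then 1 else 0
def chi (d k : ℕ) : Fin d → Fin 2 := fun i => if (i : ℕ) = k ∨ (i : ℕ) = k + 1 then 1 else 0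

lemma chi_eq (d k : ℕ) : chi d k = dvec d k + dvec d (k+1) := by
  funext i
  simp only [chi, dvec, Pi.add_apply]
  by_cases h1 : (i:ℕ) = k <;> by_cases h2 : (i:ℕ) = k+1 <;> simp [h1, h2] <;> omega

lemma sigmaX_apply (a b : Fin 2) : sigmaX a b = if b = a + 1 then 1 else 0 := by
  fin_cases a <;> fin_cases b <;> simp [sigmaX] <;> decide

lemma fin2_cases : ∀ z : Fin 2, z = 0 ∨ z = 1 := by decide

lemma fin2_add_self (a : Fin 2) : a + a = 0 := by fin_cases a <;> decide

lemma vadd_self {d : ℕ} (t : Fin d → Fin 2) : t + t = 0 := by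
  funext i; exact fin2_add_self _

lemma vadd_cancel_iff {d : ℕ} (u v t : Fin d → Fin 2) : u + t = v ↔ u = v + t := by
  constructor
  · rintro rfl; rw [add_assoc, vadd_self, add_zero]
  · rintro rfl; rw [add_assoc, vadd_self, add_zero]

lemma pauliX_apply {d : ℕ} (k : ℕ) (hk : k < d) (x y : Fin d → Fin 2) :
    pauliAtN d sigmaX k x y = if y = x + dvec d k then 1 else 0 := by
  by_cases h : y = x + dvec d k
  · subst h
    rw [if_pos rfl]
    unfold pauliAtN
    apply Finset.prod_eq_one
    intro i _
    by_cases hi : (i:ℕ) = k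
    · simp only [hi, if_pos rfl, Pi.add_apply, dvec, sigmaX_apply]
      simp [hi]
    · simp [hi, dvec, Pi.add_apply]
  · rw [if_neg h]
    unfold pauliAtN
    have : ∃ i, y i ≠ (x + dvec d k) i := by
      by_contra hc
      push_neg at hc
      exact h (funext hc)
    obtain ⟨i, hi⟩ := this
    apply Finset.prod_eq_zero (Finset.mem_univ i)
    by_cases hik : (i:ℕ) = k
    · rw [if_pos hik, sigmaX_apply, if_neg]
      intro hcon
      apply hi
      simp [dvec, hik, Pi.add_apply, hcon]
    · rw [if_neg hik, if_neg]
      intro hcon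
      apply hi
      simp [dvec, hik, Pi.add_apply, hcon]

lemma XX_apply {d : ℕ} (k : ℕ) (hk : k + 1 < d) (x y : Fin d → Fin 2) :
    (pauliAtN d sigmaX k * pauliAtN d sigmaX (k+1)) x y
      = if y = x + chi d k then 1 else 0 := by
  rw [Matrix.mul_apply]
  have h1 : ∀ z, pauliAtN d sigmaX k x z = if z = x + dvec d k then 1 else 0 :=
    pauliX_apply k (by omega) x
  have h2 : ∀ z, pauliAtN d sigmaX (k+1) z y = if y = z + dvec d (k+1) then 1 else 0 :=
    fun z => pauliX_apply (k+1) hk z y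
  simp only [h1, h2, ite_mul, one_mul, zero_mul]
  rw [Finset.sum_ite_eq' Finset.univ (x + dvec d k)
    (fun z => if y = z + dvec d (k+1) then 1 else 0)]
  simp only [Finset.mem_univ, if_pos, chi_eq, ← add_assoc]

def tvec (d : ℕ) (S : Finset (Fin (d-1))) : Fin d → Fin 2 := ∑ k ∈ S, chi d (k:ℕ)

noncomputable def hwC (d : ℕ) (w : EdgeT → ℝ) (j : ℕ) (x : Fin d → Fin 2) : ℂ :=
  ∏ i : Fin d, (if x i = 0 then 1 else (w (Sum.inl (j, (i:ℕ)+1)) : ℂ))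

noncomputable def wcol (d : ℕ) (w : EdgeT → ℝ) (j : ℕ) (S : Finset (Fin (d-1))) : ℂ :=
  ∏ k ∈ S, (w (Sum.inr (j, (k:ℕ)+1)) : ℂ)

lemma Gmat_apply (c : ℂ) (a b : Fin 2) :
    (!![1, 0; 0, c]) a b = (if a = b then 1 else 0) * (if a = 0 then 1 else c) := by
  fin_cases a <;> fin_cases b <;> simp

lemma prod_delta {d : ℕ} (x y : Fin d → Fin 2) :
    (∏ i : Fin d, if x i = y i then (1:ℂ) else 0) = if x = y then 1 else 0 := by
  by_cases h : x = y
  · subst h; simp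
  · rw [if_neg h]
    have : ∃ i, x i ≠ y i := by
      by_contra hc; push_neg at hc; exact h (funext hc)
    obtain ⟨i, hi⟩ := this
    exact Finset.prod_eq_zero (Finset.mem_univ i) (if_neg hi)

lemma hop_apply (d : ℕ) (w : EdgeT → ℝ) (j : ℕ) (x y : Fin d → Fin 2) :
    Hop d w j x y = (if x = y then 1 else 0) * hwC d w j x := by
  unfold Hop hwC
  rw [show (∏ i : Fin d, (!![1, 0; 0, ((w (Sum.inl (j, (i : ℕ) + 1)) : ℝ) : ℂ)]) (x i) (y i))
      = ∏ i : Fin d, ((if x i = y i then 1 else 0) *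
          (if x i = 0 then 1 else (w (Sum.inl (j, (i:ℕ)+1)) : ℂ)))
    from Finset.prod_congr rfl (fun i _ => Gmat_apply _ _ _)]
  rw [Finset.prod_mul_distrib, prod_delta]

lemma tvec_insert (d : ℕ) (a : Fin (d-1)) (S : Finset (Fin (d-1))) (ha : a ∉ S) :
    tvec d (insert a S) = chi d (a:ℕ) + tvec d S := by
  unfold tvec; rw [Finset.sum_insert ha]

lemma vpartial_apply (d : ℕ) (w : EdgeT → ℝ) (j : ℕ) : ∀ (n : ℕ), n ≤ d - 1 →
    ∀ (x y : Fin d → Fin 2),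
    (((List.range n).map (fun i =>
      (1 : Matrix (Fin d → Fin 2) (Fin d → Fin 2) ℂ) +
        (w (Sum.inr (j, i + 1)) : ℂ) • (pauliAtN d sigmaX i * pauliAtN d sigmaX (i + 1)))).prod) x y
    = ∑ S ∈ (Finset.univ.filter (fun k : Fin (d-1) => (k:ℕ) < n)).powerset,
        wcol d w j S * (if y = x + tvec d S then 1 else 0) := by
  intro n
  induction n with
  | zero =>
    intro hn x y
    have : (Finset.univ.filter (fun k : Fin (d-1) => (k:ℕ) < 0)) = (∅ : Finset (Fin (d-1))) := by
      ext k; simp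
    rw [this]
    simp only [Finset.powerset_empty, Finset.sum_singleton]
    have ht : tvec d (∅ : Finset (Fin (d-1))) = 0 := by simp [tvec]
    simp [wcol, ht, List.range_zero, Matrix.one_apply, eq_comm]
  | succ n ih =>
    intro hn x y
    have hn' : n ≤ d - 1 := by omega
    have hnd : n < d - 1 := by omega
    rw [List.range_succ, List.map_append, List.prod_append, List.map_singleton,
      List.prod_singleton]
    set A := (((List.range n).map (fun i =>
      (1 : Matrix (Fin d → Fin 2) (Fin d → Fin 2) ℂ) +
        (w (Sum.inr (j, i + 1)) : ℂ) • (pauliAtN d sigmaX i * pauliAtN d sigmaX (i + 1)))).prod)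
      with hA
    set c := ((w (Sum.inr (j, n + 1)) : ℝ) : ℂ) with hc
    rw [Matrix.mul_apply]
    have hXX : ∀ z : Fin d → Fin 2,
        ((1 : Matrix (Fin d → Fin 2) (Fin d → Fin 2) ℂ) +
          c • (pauliAtN d sigmaX n * pauliAtN d sigmaX (n + 1))) z y
        = (if z = y then 1 else 0) + c * (if z = y + chi d n then 1 else 0) := by
      intro z
      have h1 := XX_apply (d := d) n (by omega) z y
      have h2 : ∀ z : Fin d → Fin 2, (y = z + chi d n) ↔ (z = y + chi d n) := by
        intro z; rw [eq_comm, vadd_cancel_iff]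
      simp only [Matrix.add_apply, Matrix.smul_apply, Matrix.one_apply, h1, smul_eq_mul, h2]
    simp only [hXX, mul_add]
    rw [Finset.sum_add_distrib]
    have e1 : (∑ z : Fin d → Fin 2, A x z * (if z = y then 1 else 0)) = A x y := by
      simp only [mul_ite, mul_one, mul_zero]
      rw [Finset.sum_ite_eq' Finset.univ y (fun z => A x z)]
      simp
    have e2 : (∑ z : Fin d → Fin 2, A x z * (c * if z = y + chi d n then 1 else 0))
        = c * A x (y + chi d n) := by
      simp only [mul_ite, mul_one, mul_zero]
      rw [Finset.sum_ite_eq' Finset.univ (y + chi d n) (fun z => A x z * c)]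
      simp [mul_comm]
    rw [e1, e2, ih hn' x y, ih hn' x (y + chi d n)]
    -- now massage the RHS
    set a : Fin (d-1) := ⟨n, hnd⟩ with ha
    have hfil : (Finset.univ.filter (fun k : Fin (d-1) => (k:ℕ) < n + 1))
        = insert a (Finset.univ.filter (fun k : Fin (d-1) => (k:ℕ) < n)) := by
      ext k
      simp only [Finset.mem_filter, Finset.mem_univ, true_and, Finset.mem_insert]
      constructor
      · intro hk
        by_cases hkn : (k:ℕ) = n
        · left; apply Fin.ext; simp [ha, hkn]
        · right; omega
      · rintro (rfl | hk)
        · simp [ha]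
        · omega
    have hanot : a ∉ Finset.univ.filter (fun k : Fin (d-1) => (k:ℕ) < n) := by
      simp [ha]
    rw [hfil, Finset.sum_powerset_insert hanot]
    congr 1
    rw [Finset.mul_sum]
    apply Finset.sum_congr rfl
    intro S hS
    have haS : a ∉ S := fun h => hanot (Finset.mem_powerset.mp hS h)
    rw [tvec_insert d a S haS]
    have hwcol : wcol d w j (insert a S) = c * wcol d w j S := by
      unfold wcol; rw [Finset.prod_insert haS]
    have hcond : (y + chi d n = x + tvec d S) ↔ (y = x + (chi d (a:ℕ) + tvec d S)) := by
      rw [vadd_cancel_iff]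
      constructor
      · intro h; rw [h]; show _ = x + (chi d n + tvec d S); abel
      · intro h; rw [h]; show x + (chi d n + tvec d S) = _; abel
    rw [hwcol]
    by_cases h : y + chi d n = x + tvec d S
    · rw [if_pos h, if_pos (hcond.mp h)]; ring
    · rw [if_neg h, if_neg (fun hc => h (hcond.mpr hc))]; ring

lemma vop_apply (d : ℕ) (w : EdgeT → ℝ) (j : ℕ) (x y : Fin d → Fin 2) :
    Vop d w j x y = ∑ S : Finset (Fin (d-1)),
      wcol d w j S * (if y = x + tvec d S then 1 else 0) := by
  have := vpartial_apply d w j (d-1) le_rfl x y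
  rw [Vop, this]
  have hfil : (Finset.univ.filter (fun k : Fin (d-1) => (k:ℕ) < d - 1))
      = (Finset.univ : Finset (Fin (d-1))) := by
    ext k; simp [k.isLt]
  rw [hfil, Finset.powerset_univ]


noncomputable def Pprod (d : ℕ) (w : EdgeT → ℝ) (m : ℕ) :
    Matrix (Fin d → Fin 2) (Fin d → Fin 2) ℂ :=
  ((List.range m).reverse.map (fun j => Vop d w (j + 1) * Hop d w (j + 1))).prod

noncomputable def Zvec (d : ℕ) (w : EdgeT → ℝ) (m : ℕ) : (Fin d → Fin 2) → ℂ :=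
  (Pprod d w m).mulVec (psiE d)

lemma Pprod_succ (d : ℕ) (w : EdgeT → ℝ) (m : ℕ) :
    Pprod d w (m + 1) = (Vop d w (m + 1) * Hop d w (m + 1)) * Pprod d w m := by
  unfold Pprod
  rw [List.range_succ, List.reverse_append]
  simp

lemma hop_mulVec (d : ℕ) (w : EdgeT → ℝ) (j : ℕ) (v : (Fin d → Fin 2) → ℂ) :
    (Hop d w j).mulVec v = fun x => hwC d w j x * v x := by
  funext x
  unfold Matrix.mulVec dotProduct
  simp only [hop_apply]
  simp only [ite_mul, one_mul, zero_mul, mul_ite, mul_zero]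
  rw [Finset.sum_ite_eq Finset.univ x (fun y => hwC d w j x * v y)]
  simp

lemma vop_mulVec (d : ℕ) (w : EdgeT → ℝ) (j : ℕ) (v : (Fin d → Fin 2) → ℂ) :
    (Vop d w j).mulVec v = fun x => ∑ S : Finset (Fin (d-1)), wcol d w j S * v (x + tvec d S) := by
  funext x
  unfold Matrix.mulVec dotProduct
  simp only [vop_apply, Finset.sum_mul]
  rw [Finset.sum_comm]
  apply Finset.sum_congr rfl
  intro S _
  simp only [mul_ite, ite_mul, mul_one, mul_zero, zero_mul, one_mul]
  rw [Finset.sum_ite_eq' Finset.univ (x + tvec d S) (fun y => wcol d w j S * v y)]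
  simp

lemma zvec_zero (d : ℕ) (w : EdgeT → ℝ) : Zvec d w 0 = psiE d := by
  unfold Zvec Pprod
  simp [Matrix.one_mulVec]

lemma zvec_succ (d : ℕ) (w : EdgeT → ℝ) (m : ℕ) (x : Fin d → Fin 2) :
    Zvec d w (m + 1) x = ∑ S : Finset (Fin (d-1)),
      wcol d w (m+1) S * (hwC d w (m+1) (x + tvec d S) * Zvec d w m (x + tvec d S)) := by
  have h : Zvec d w (m + 1)
      = (Vop d w (m+1)).mulVec ((Hop d w (m+1)).mulVec (Zvec d w m)) := by
    unfold Zvec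
    rw [Pprod_succ, Matrix.mul_assoc, ← Matrix.mulVec_mulVec, ← Matrix.mulVec_mulVec]
  rw [h, vop_mulVec, hop_mulVec]

def extS (d : ℕ) {m : ℕ} (S : Fin m → Finset (Fin (d-1))) : ℕ → Finset (Fin (d-1)) :=
  fun j => if h : j < m then S ⟨j, h⟩ else ∅

def layer (d : ℕ) (x₀ : Fin d → Fin 2) {m : ℕ} (S : Fin m → Finset (Fin (d-1))) (n : ℕ) :
    Fin d → Fin 2 :=
  x₀ + ∑ j ∈ Finset.range n, tvec d (extS d S j)

lemma layer_zero (d : ℕ) (x₀ : Fin d → Fin 2) {m : ℕ} (S : Fin m → Finset (Fin (d-1))) :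
    layer d x₀ S 0 = x₀ := by simp [layer]

lemma layer_succ (d : ℕ) (x₀ : Fin d → Fin 2) {m : ℕ} (S : Fin m → Finset (Fin (d-1))) (n : ℕ) :
    layer d x₀ S (n+1) = layer d x₀ S n + tvec d (extS d S n) := by
  unfold layer
  rw [Finset.sum_range_succ, add_assoc]

lemma extS_snoc (d : ℕ) {m : ℕ} (S : Fin m → Finset (Fin (d-1))) (T : Finset (Fin (d-1)))
    (j : ℕ) (hj : j < m) :
    extS d (Fin.snoc S T : Fin (m+1) → Finset (Fin (d-1))) j = extS d S j := by
  unfold extS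
  rw [dif_pos hj, dif_pos (show j < m + 1 by omega)]
  have h2 : (⟨j, show j < m+1 by omega⟩ : Fin (m+1)) = Fin.castSucc ⟨j, hj⟩ := rfl
  rw [h2, Fin.snoc_castSucc]

lemma extS_snoc_last (d : ℕ) {m : ℕ} (S : Fin m → Finset (Fin (d-1))) (T : Finset (Fin (d-1))) :
    extS d (Fin.snoc S T : Fin (m+1) → Finset (Fin (d-1))) m = T := by
  unfold extS
  rw [dif_pos (show m < m + 1 by omega)]
  have h2 : (⟨m, show m < m+1 by omega⟩ : Fin (m+1)) = Fin.last m := rfl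
  rw [h2, Fin.snoc_last]

lemma layer_snoc (d : ℕ) (x₀ : Fin d → Fin 2) {m : ℕ} (S : Fin m → Finset (Fin (d-1)))
    (T : Finset (Fin (d-1))) (n : ℕ) (hn : n ≤ m) :
    layer d x₀ (Fin.snoc S T : Fin (m+1) → Finset (Fin (d-1))) n = layer d x₀ S n := by
  unfold layer
  congr 1
  apply Finset.sum_congr rfl
  intro j hj
  rw [extS_snoc d S T j (by simp at hj; omega)]

lemma zvec_closed (d : ℕ) (w : EdgeT → ℝ) (m : ℕ) :
    ∀ x : Fin d → Fin 2,
    Zvec d w m x = ∑ x₀ : Fin d → Fin 2, ∑ S : Fin m → Finset (Fin (d-1)),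
      psiE d x₀ *
        (∏ j : Fin m, wcol d w ((j:ℕ)+1) (S j) * hwC d w ((j:ℕ)+1) (layer d x₀ S (j:ℕ)))
        * (if x = layer d x₀ S m then 1 else 0) := by
  induction m with
  | zero =>
    intro x
    rw [zvec_zero]
    have : ∀ x₀ : Fin d → Fin 2,
        (∑ S : Fin 0 → Finset (Fin (d-1)), psiE d x₀ *
          (∏ j : Fin 0, wcol d w ((j:ℕ)+1) (S j) * hwC d w ((j:ℕ)+1) (layer d x₀ S (j:ℕ)))
          * (if x = layer d x₀ S 0 then 1 else 0))
        = psiE d x₀ * (if x = x₀ then 1 else 0) := by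
      intro x₀
      rw [Fintype.sum_unique]
      simp [layer_zero]
    simp only [this]
    simp only [mul_ite, mul_one, mul_zero]
    rw [Finset.sum_ite_eq Finset.univ x (fun x₀ => psiE d x₀)]
    simp
  | succ m ih =>
    intro x
    rw [zvec_succ]
    have hsplit : ∀ (f : (Fin (m+1) → Finset (Fin (d-1))) → ℂ),
        (∑ S : Fin (m+1) → Finset (Fin (d-1)), f S)
          = ∑ T : Finset (Fin (d-1)), ∑ S : Fin m → Finset (Fin (d-1)),
              f (Fin.snoc S T : Fin (m+1) → Finset (Fin (d-1))) := by
      intro f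
      rw [← Equiv.sum_comp (Fin.snocEquiv (fun _ => Finset (Fin (d-1)))) f,
        Fintype.sum_prod_type]
      rfl
    simp only [hsplit]
    rw [Finset.sum_comm]
    apply Finset.sum_congr rfl
    intro T _
    rw [ih]
    simp only [Finset.mul_sum]
    apply Finset.sum_congr rfl
    intro x₀ _
    apply Finset.sum_congr rfl
    intro S _
    -- pointwise identity
    have hprod : (∏ j : Fin (m+1),
        wcol d w ((j:ℕ)+1) ((Fin.snoc S T : Fin (m+1) → Finset (Fin (d-1))) j) *
          hwC d w ((j:ℕ)+1) (layer d x₀ (Fin.snoc S T : Fin (m+1) → Finset (Fin (d-1))) (j:ℕ)))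
        = (∏ j : Fin m, wcol d w ((j:ℕ)+1) (S j) * hwC d w ((j:ℕ)+1) (layer d x₀ S (j:ℕ)))
          * (wcol d w (m+1) T * hwC d w (m+1) (layer d x₀ S m)) := by
      rw [Fin.prod_univ_castSucc]
      congr 1
      · apply Finset.prod_congr rfl
        intro j _
        rw [Fin.snoc_castSucc]
        rw [Fin.coe_castSucc, layer_snoc d x₀ S T (j:ℕ) (by omega)]
      · rw [Fin.val_last, Fin.snoc_last, layer_snoc d x₀ S T m (le_refl m)]
    have hlay : layer d x₀ (Fin.snoc S T : Fin (m+1) → Finset (Fin (d-1))) (m+1)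
        = layer d x₀ S m + tvec d T := by
      rw [layer_succ, extS_snoc_last, layer_snoc d x₀ S T m (le_refl m)]
    rw [hprod, hlay]
    by_cases hx : x + tvec d T = layer d x₀ S m
    · have hx2 : x = layer d x₀ S m + tvec d T := (vadd_cancel_iff _ _ _).mp hx
      rw [if_pos hx, if_pos hx2, hx]
      ring
    · have hx2 : ¬(x = layer d x₀ S m + tvec d T) :=
        fun hc => hx ((vadd_cancel_iff _ _ _).mpr hc)
      rw [if_neg hx, if_neg hx2]
      ring

end SC

namespace SC
open Finset

lemma even_sum_iff {ι : Type*} (s : Finset ι) (u : ι → Fin 2) :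
    Even (∑ i ∈ s, (u i : ℕ)) ↔ (∑ i ∈ s, u i) = 0 := by
  classical
  induction s using Finset.induction_on with
  | empty => simp
  | insert a s' ha ih =>
    rw [Finset.sum_insert ha, Finset.sum_insert ha]
    have h01 : ∀ z : Fin 2, z = 0 ∨ z = 1 := by decide
    rcases h01 (u a) with h | h
    · simp [h, ih]
    · rw [h]
      simp only [Fin.val_one]
      rw [add_comm (1:ℕ), Nat.even_add_one]
      rcases h01 (∑ i ∈ s', u i) with h2 | h2 <;> rw [h2] at ih ⊢
      · have he : Even (∑ i ∈ s', ((u i : ℕ))) := ih.mpr rfl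
        simp [he]
      · have hne : ¬ Even (∑ i ∈ s', ((u i : ℕ))) := fun he => absurd (ih.mp he) (by decide)
        simp [hne]

lemma psiE_eq (d : ℕ) (u : Fin d → Fin 2) :
    psiE d u = if (∑ i, u i) = 0 then 1 else 0 := by
  unfold psiE
  rw [if_congr (even_sum_iff Finset.univ u) rfl rfl]

lemma par_dvec (d k : ℕ) (hk : k < d) : (∑ i, dvec d k i) = 1 := by
  unfold dvec
  have : ∀ i : Fin d, ((i:ℕ) = k) = (i = (⟨k, hk⟩ : Fin d)) := by
    intro i; simp [Fin.ext_iff]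
  simp only [this]
  rw [Finset.sum_ite_eq' Finset.univ (⟨k, hk⟩ : Fin d) (fun _ => (1 : Fin 2))]
  simp

lemma par_chi (d k : ℕ) (hk : k + 1 < d) : (∑ i, chi d k i) = 0 := by
  rw [chi_eq]
  simp only [Pi.add_apply]
  rw [Finset.sum_add_distrib, par_dvec d k (by omega), par_dvec d (k+1) hk]
  decide

lemma par_tvec (d : ℕ) (S : Finset (Fin (d-1))) : (∑ i, tvec d S i) = 0 := by
  unfold tvec
  simp only [Finset.sum_apply]
  rw [Finset.sum_comm]
  apply Finset.sum_eq_zero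
  intro k _
  exact par_chi d (k:ℕ) (by have := k.isLt; omega)

lemma par_layer (d : ℕ) (x₀ : Fin d → Fin 2) {m : ℕ} (S : Fin m → Finset (Fin (d-1)))
    (n : ℕ) : (∑ i, layer d x₀ S n i) = ∑ i, x₀ i := by
  unfold layer
  simp only [Pi.add_apply, Finset.sum_apply]
  rw [Finset.sum_add_distrib]
  have hz : (∑ i : Fin d, ∑ j ∈ Finset.range n, tvec d (extS d S j) i) = 0 := by
    rw [Finset.sum_comm]
    apply Finset.sum_eq_zero
    intro j _
    exact par_tvec d (extS d S j)
  rw [hz, add_zero]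

lemma psiE_layer (d : ℕ) (x₀ : Fin d → Fin 2) {m : ℕ} (S : Fin m → Finset (Fin (d-1)))
    (n : ℕ) : psiE d (layer d x₀ S n) = psiE d x₀ := by
  rw [psiE_eq, psiE_eq, par_layer]

end SC

namespace SC
open Finset

lemma mem_edges_inl (d : ℕ) (p : ℕ × ℕ) : Sum.inl p ∈ Edges d ↔ p ∈ Hedges d := by
  simp [Edges]

lemma mem_edges_inr (d : ℕ) (p : ℕ × ℕ) : Sum.inr p ∈ Edges d ↔ p ∈ Vedges d := by
  simp [Edges]

lemma inHCol_inl (j : ℕ) (p : ℕ × ℕ) : InHCol j (Sum.inl p) ↔ p.1 = j := Iff.rfl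
lemma inHCol_inr (j : ℕ) (p : ℕ × ℕ) : InHCol j (Sum.inr p) ↔ False := Iff.rfl

lemma incident_inl (s : ℕ × ℕ) (p : ℕ × ℕ) :
    Incident s (Sum.inl p) ↔ (p.1 = s.1 ∨ p.1 = s.1 + 1) ∧ p.2 = s.2 := Iff.rfl
lemma incident_inr (s : ℕ × ℕ) (p : ℕ × ℕ) :
    Incident s (Sum.inr p) ↔ p.1 = s.1 ∧ (p.2 + 1 = s.2 ∨ p.2 = s.2) := Iff.rfl

lemma even_four (P Q R T : Prop) [Decidable P] [Decidable Q] [Decidable R] [Decidable T] :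
    Even ((if P then 1 else 0) + (if Q then 1 else 0) + (if R then 1 else 0)
        + (if T then 1 else 0) : ℕ)
      ↔ ((if Q then (1:Fin 2) else 0)
          = (if P then (1:Fin 2) else 0) + (if R then (1:Fin 2) else 0)
            + (if T then (1:Fin 2) else 0)) := by
  by_cases hP : P <;> by_cases hQ : Q <;> by_cases hR : R <;> by_cases hT : T <;>
    simp [hP, hQ, hR, hT] <;> decide

lemma incident_iff (d j i : ℕ) (hi : 1 ≤ i) (e : EdgeT) :
    Incident (j, i) e ↔ e = Sum.inl (j,i) ∨ e = Sum.inl (j+1,i)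
      ∨ e = Sum.inr (j,i-1) ∨ e = Sum.inr (j,i) := by
  cases e with
  | inl p =>
    obtain ⟨a, b⟩ := p
    rw [incident_inl]
    simp only [Sum.inl.injEq, Sum.inr.injEq, Prod.mk.injEq]
    constructor
    · rintro ⟨h1 | h1, h2⟩
      · exact Or.inl ⟨h1, h2⟩
      · exact Or.inr (Or.inl ⟨h1, h2⟩)
    · rintro (⟨h1, h2⟩ | ⟨h1, h2⟩ | h | h)
      · exact ⟨Or.inl h1, h2⟩
      · exact ⟨Or.inr h1, h2⟩
      · exact absurd h (by simp)
      · exact absurd h (by simp)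
  | inr p =>
    obtain ⟨a, b⟩ := p
    rw [incident_inr]
    simp only [Sum.inl.injEq, Sum.inr.injEq, Prod.mk.injEq]
    constructor
    · rintro ⟨rfl, h2 | h2⟩
      · exact Or.inr (Or.inr (Or.inl ⟨rfl, by omega⟩))
      · exact Or.inr (Or.inr (Or.inr ⟨rfl, h2⟩))
    · rintro (h | h | ⟨rfl, rfl⟩ | ⟨rfl, rfl⟩)
      · exact absurd h (by simp)
      · exact absurd h (by simp)
      · exact ⟨rfl, Or.inl (by omega)⟩
      · exact ⟨rfl, Or.inr rfl⟩

lemma card_filter_incident (d : ℕ) (g : Finset EdgeT) (j i : ℕ) (hi : 1 ≤ i) :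
    (g.filter (fun e => Incident (j, i) e)).card
      = (if Sum.inl (j,i) ∈ g then 1 else 0) + (if Sum.inl ((j+1 : ℕ),i) ∈ g then 1 else 0)
        + (if Sum.inr (j,i-1) ∈ g then 1 else 0) + (if Sum.inr (j,i) ∈ g then 1 else 0) := by
  classical
  have h1 : g.filter (fun e => Incident (j,i) e)
      = g.filter (fun e => e ∈ ({Sum.inl (j,i), Sum.inl ((j+1:ℕ),i), Sum.inr (j,i-1),
          Sum.inr (j,i)} : Finset EdgeT)) := by
    apply Finset.filter_congr
    intro e _
    rw [incident_iff d j i hi e]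
    simp
  rw [h1, Finset.filter_mem_eq_inter, Finset.inter_comm, ← Finset.filter_mem_eq_inter]
  rw [Finset.card_filter]
  have hd1 : (Sum.inl (j,i) : EdgeT) ∉ ({Sum.inl ((j+1:ℕ),i), Sum.inr (j,i-1),
      Sum.inr (j,i)} : Finset EdgeT) := by simp; try omega
  have hd2 : (Sum.inl ((j+1:ℕ),i) : EdgeT) ∉ ({Sum.inr (j,i-1), Sum.inr (j,i)} : Finset EdgeT) := by
    simp
  have hd3 : (Sum.inr (j,i-1) : EdgeT) ∉ ({Sum.inr (j,i)} : Finset EdgeT) := by simp; try omega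
  rw [show ({Sum.inl (j,i), Sum.inl ((j+1:ℕ),i), Sum.inr (j,i-1), Sum.inr (j,i)} : Finset EdgeT)
      = insert (Sum.inl (j,i)) (insert (Sum.inl ((j+1:ℕ),i)) (insert (Sum.inr (j,i-1))
        ({Sum.inr (j,i)} : Finset EdgeT))) from rfl]
  rw [Finset.sum_insert hd1, Finset.sum_insert hd2, Finset.sum_insert hd3, Finset.sum_singleton]
  omega

lemma hcol_filter_eq (d : ℕ) (g : Finset EdgeT) (hg : g ⊆ Edges d) (j : ℕ) :
    g.filter (fun e => InHCol j e)
      = ((Finset.univ.filter (fun i : Fin d => Sum.inl (j,(i:ℕ)+1) ∈ g)).image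
          (fun i : Fin d => (Sum.inl (j,(i:ℕ)+1) : EdgeT))) := by
  ext e
  simp only [Finset.mem_filter, Finset.mem_image, Finset.mem_univ, true_and]
  constructor
  · rintro ⟨heg, hcol⟩
    cases e with
    | inl p =>
      obtain ⟨a, b⟩ := p
      rw [inHCol_inl] at hcol
      simp only at hcol
      subst hcol
      have hb : 1 ≤ b ∧ b ≤ d := by
        have := (mem_edges_inl d _).mp (hg heg)
        simp [Hedges, Finset.mem_product] at this
        omega
      refine ⟨⟨b-1, by omega⟩, ?_, ?_⟩
      · simpa [show b - 1 + 1 = b by omega] using heg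
      · simp [show b - 1 + 1 = b by omega]
    | inr p => exact absurd hcol ((inHCol_inr j p).mp)
  · rintro ⟨i, hig, rfl⟩
    exact ⟨hig, rfl⟩

lemma card_filter_hcol (d : ℕ) (g : Finset EdgeT) (hg : g ⊆ Edges d) (j : ℕ) :
    (g.filter (fun e => InHCol j e)).card
      = ∑ i : Fin d, (if Sum.inl (j,(i:ℕ)+1) ∈ g then 1 else 0) := by
  rw [hcol_filter_eq d g hg j, Finset.card_image_of_injective _
    (fun i1 i2 h => by simpa [Fin.ext_iff] using h), Finset.card_filter]

lemma tvec_apply (d : ℕ) (T : Finset (Fin (d-1))) (p : Fin d) :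
    tvec d T p
      = (if h : (p:ℕ) < d - 1 then (if (⟨(p:ℕ), h⟩ : Fin (d-1)) ∈ T then 1 else 0) else 0)
        + (if h : 1 ≤ (p:ℕ) ∧ (p:ℕ) - 1 < d - 1 then
            (if (⟨(p:ℕ)-1, h.2⟩ : Fin (d-1)) ∈ T then 1 else 0) else 0) := by
  unfold tvec chi
  rw [show (∑ k ∈ T, fun i : Fin d => if (i:ℕ) = (k:ℕ) ∨ (i:ℕ) = (k:ℕ) + 1 then (1:Fin 2) else 0)
      p = ∑ k ∈ T, (if (p:ℕ) = (k:ℕ) ∨ (p:ℕ) = (k:ℕ) + 1 then (1:Fin 2) else 0) from by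
    simp]
  have hsplit : ∀ k : Fin (d-1),
      (if (p:ℕ) = (k:ℕ) ∨ (p:ℕ) = (k:ℕ) + 1 then (1:Fin 2) else 0)
        = (if (p:ℕ) = (k:ℕ) then (1:Fin 2) else 0)
          + (if (p:ℕ) = (k:ℕ) + 1 then (1:Fin 2) else 0) := by
    intro k
    by_cases h1 : (p:ℕ) = (k:ℕ) <;> by_cases h2 : (p:ℕ) = (k:ℕ) + 1 <;>
      first | omega | simp [h1, h2]
  rw [Finset.sum_congr rfl (fun k _ => hsplit k), Finset.sum_add_distrib]
  congr 1
  · by_cases h : (p:ℕ) < d - 1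
    · rw [dif_pos h]
      have : ∀ k : Fin (d-1), ((p:ℕ) = (k:ℕ)) = (k = (⟨(p:ℕ), h⟩ : Fin (d-1))) := by
        intro k; simp [Fin.ext_iff, eq_comm]
      simp only [this]
      rw [Finset.sum_ite_eq' T (⟨(p:ℕ), h⟩ : Fin (d-1)) (fun _ => (1:Fin 2))]
    · rw [dif_neg h]
      apply Finset.sum_eq_zero
      intro k _
      rw [if_neg]
      have := k.isLt
      omega
  · by_cases h : 1 ≤ (p:ℕ) ∧ (p:ℕ) - 1 < d - 1
    · rw [dif_pos h]
      have : ∀ k : Fin (d-1), ((p:ℕ) = (k:ℕ) + 1) = (k = (⟨(p:ℕ) - 1, h.2⟩ : Fin (d-1))) := by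
        intro k; simp [Fin.ext_iff]; omega
      simp only [this]
      rw [Finset.sum_ite_eq' T (⟨(p:ℕ) - 1, h.2⟩ : Fin (d-1)) (fun _ => (1:Fin 2))]
    · rw [dif_neg h]
      apply Finset.sum_eq_zero
      intro k _
      rw [if_neg]
      have := k.isLt
      have := p.isLt
      omega

end SC

namespace SC
open Finset

def lbitN (d : ℕ) (x₀ : Fin d → Fin 2) (S : Fin (d-1) → Finset (Fin (d-1))) (j i : ℕ) : Fin 2 :=
  if h : i - 1 < d then layer d x₀ S (j-1) ⟨i-1, h⟩ else 0

def vbitN (d : ℕ) (S : Fin (d-1) → Finset (Fin (d-1))) (j k : ℕ) : Prop :=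
  if h : k - 1 < d - 1 then (⟨k-1, h⟩ : Fin (d-1)) ∈ extS d S (j-1) else False

noncomputable def gconf (d : ℕ) (x₀ : Fin d → Fin 2) (S : Fin (d-1) → Finset (Fin (d-1))) :
    Finset EdgeT :=
  ((Hedges d).filter (fun p => lbitN d x₀ S p.1 p.2 = 1)).map ⟨Sum.inl, Sum.inl_injective⟩
    ∪ ((Vedges d).filter (fun p => vbitN d S p.1 p.2)).map ⟨Sum.inr, Sum.inr_injective⟩

lemma mem_hedges (d : ℕ) (p : ℕ × ℕ) :
    p ∈ Hedges d ↔ (1 ≤ p.1 ∧ p.1 ≤ d) ∧ (1 ≤ p.2 ∧ p.2 ≤ d) := by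
  simp [Hedges, Finset.mem_product]

lemma mem_vedges (d : ℕ) (p : ℕ × ℕ) :
    p ∈ Vedges d ↔ (1 ≤ p.1 ∧ p.1 ≤ d - 1) ∧ (1 ≤ p.2 ∧ p.2 ≤ d - 1) := by
  simp [Vedges, Finset.mem_product]

lemma mem_gconf_inl (d : ℕ) (x₀ : Fin d → Fin 2) (S : Fin (d-1) → Finset (Fin (d-1)))
    (p : ℕ × ℕ) :
    Sum.inl p ∈ gconf d x₀ S ↔ p ∈ Hedges d ∧ lbitN d x₀ S p.1 p.2 = 1 := by
  simp [gconf]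

lemma mem_gconf_inr (d : ℕ) (x₀ : Fin d → Fin 2) (S : Fin (d-1) → Finset (Fin (d-1)))
    (p : ℕ × ℕ) :
    Sum.inr p ∈ gconf d x₀ S ↔ p ∈ Vedges d ∧ vbitN d S p.1 p.2 := by
  simp [gconf]

lemma gconf_subset (d : ℕ) (x₀ : Fin d → Fin 2) (S : Fin (d-1) → Finset (Fin (d-1))) :
    gconf d x₀ S ⊆ Edges d := by
  intro e he
  cases e with
  | inl p =>
    rw [mem_edges_inl]
    exact ((mem_gconf_inl d x₀ S p).mp he).1
  | inr p =>
    rw [mem_edges_inr]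
    exact ((mem_gconf_inr d x₀ S p).mp he).1

lemma ind2_fin (x : Fin 2) : (if x = 1 then (1:Fin 2) else 0) = x := by
  fin_cases x <;> simp

/-- The key pointwise site identity, valid for any `g` whose indicators are described
by layers: a reusable formulation.  Here we prove it for `gconf`. -/
lemma gconf_site (d : ℕ) (x₀ : Fin d → Fin 2) (S : Fin (d-1) → Finset (Fin (d-1)))
    (j i : ℕ) (hj : 1 ≤ j ∧ j ≤ d - 1) (hi : 1 ≤ i ∧ i ≤ d) :
    (if Sum.inl ((j+1 : ℕ), i) ∈ gconf d x₀ S then (1:Fin 2) else 0)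
      = (if Sum.inl (j, i) ∈ gconf d x₀ S then (1:Fin 2) else 0)
        + (if Sum.inr (j, i-1) ∈ gconf d x₀ S then (1:Fin 2) else 0)
        + (if Sum.inr (j, i) ∈ gconf d x₀ S then (1:Fin 2) else 0) := by
  have hd2 : 2 ≤ d := by omega
  have hid : i - 1 < d := by omega
  set p : Fin d := ⟨i - 1, hid⟩ with hp
  have hpv : (p:ℕ) = i - 1 := by rw [hp]
  -- horizontal indicators
  have hh : ∀ j' : ℕ, 1 ≤ j' → j' ≤ d →
      (if Sum.inl (j', i) ∈ gconf d x₀ S then (1:Fin 2) else 0) = layer d x₀ S (j'-1) p := by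
    intro j' h1 h2
    rw [if_congr (mem_gconf_inl d x₀ S (j', i)) rfl rfl]
    have hmem : (j', i) ∈ Hedges d := by rw [mem_hedges]; omega
    have hlb : lbitN d x₀ S j' i = layer d x₀ S (j'-1) p := by
      unfold lbitN; rw [dif_pos hid]
    simp only [hmem, true_and, hlb]
    exact ind2_fin _
  -- vertical indicators
  have hv1 : (if Sum.inr (j, i) ∈ gconf d x₀ S then (1:Fin 2) else 0)
      = (if h : (p:ℕ) < d - 1 then
          (if (⟨(p:ℕ), h⟩ : Fin (d-1)) ∈ extS d S (j-1) then (1:Fin 2) else 0) else 0) := by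
    rw [if_congr (mem_gconf_inr d x₀ S (j, i)) rfl rfl]
    by_cases h : (p:ℕ) < d - 1
    · rw [dif_pos h]
      have hmem : (j, i) ∈ Vedges d := by rw [mem_vedges]; omega
      have hvb : vbitN d S j i ↔ (⟨(p:ℕ), h⟩ : Fin (d-1)) ∈ extS d S (j-1) := by
        unfold vbitN
        rw [dif_pos (show i - 1 < d - 1 from h)]
      simp [hmem, hvb]
    · rw [dif_neg h]
      have hmem : ¬ ((j, i) ∈ Vedges d) := by rw [mem_vedges]; omega
      simp [hmem]
  have hv2 : (if Sum.inr (j, i-1) ∈ gconf d x₀ S then (1:Fin 2) else 0)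
      = (if h : 1 ≤ (p:ℕ) ∧ (p:ℕ) - 1 < d - 1 then
          (if (⟨(p:ℕ)-1, h.2⟩ : Fin (d-1)) ∈ extS d S (j-1) then (1:Fin 2) else 0) else 0) := by
    rw [if_congr (mem_gconf_inr d x₀ S (j, i-1)) rfl rfl]
    by_cases h : 1 ≤ (p:ℕ) ∧ (p:ℕ) - 1 < d - 1
    · rw [dif_pos h]
      have hmem : (j, i-1) ∈ Vedges d := by rw [mem_vedges]; omega
      have hvb : vbitN d S j (i-1) ↔ (⟨(p:ℕ)-1, h.2⟩ : Fin (d-1)) ∈ extS d S (j-1) := by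
        unfold vbitN
        have : i - 1 - 1 < d - 1 := by omega
        rw [dif_pos this]
      simp [hmem, hvb]
    · rw [dif_neg h]
      have hmem : ¬ ((j, i-1) ∈ Vedges d) := by rw [mem_vedges]; omega
      simp [hmem]
  rw [hh (j+1) (by omega) (by omega), hh j (by omega) (by omega), hv1, hv2]
  have hstep : layer d x₀ S (j+1-1) p = layer d x₀ S (j-1) p + tvec d (extS d S (j-1)) p := by
    have : j + 1 - 1 = (j-1) + 1 := by omega
    rw [this, layer_succ]
    simp
  rw [hstep, tvec_apply]
  abel

lemma gconf_cycle (d : ℕ) (x₀ : Fin d → Fin 2) (S : Fin (d-1) → Finset (Fin (d-1))) :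
    IsCycle d (gconf d x₀ S) := by
  refine ⟨gconf_subset d x₀ S, ?_⟩
  intro j hj i hi
  rw [Finset.mem_Icc] at hj hi
  rw [card_filter_incident d _ j i hi.1, even_four]
  exact gconf_site d x₀ S j i hj hi

lemma gconf_evenH (d : ℕ) (x₀ : Fin d → Fin 2) (S : Fin (d-1) → Finset (Fin (d-1)))
    (hx : Even (∑ i, (x₀ i : ℕ))) :
    EvenHColumns d (gconf d x₀ S) := by
  intro j hj
  rw [Finset.mem_Icc] at hj
  rw [card_filter_hcol d _ (gconf_subset d x₀ S) j]
  have hterm : ∀ i : Fin d,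
      (if Sum.inl (j, (i:ℕ)+1) ∈ gconf d x₀ S then (1:ℕ) else 0)
        = ((layer d x₀ S (j-1) i : Fin 2) : ℕ) := by
    intro i
    rw [if_congr (mem_gconf_inl d x₀ S (j, (i:ℕ)+1)) rfl rfl]
    have hmem : (j, (i:ℕ)+1) ∈ Hedges d := by
      rw [mem_hedges]; have := i.isLt; omega
    have hlb : lbitN d x₀ S j ((i:ℕ)+1) = layer d x₀ S (j-1) i := by
      unfold lbitN
      rw [dif_pos (show (i:ℕ)+1-1 < d by have := i.isLt; omega)]
      congr 1
    simp only [hmem, true_and, hlb]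
    rcases fin2_cases (layer d x₀ S (j-1) i) with h | h <;> simp [h]
  rw [Finset.sum_congr rfl (fun i _ => hterm i)]
  rw [even_sum_iff, par_layer]
  exact (even_sum_iff Finset.univ x₀).mp hx

def xg (d : ℕ) (g : Finset EdgeT) : Fin d → Fin 2 :=
  fun i => if Sum.inl ((1:ℕ), (i:ℕ)+1) ∈ g then 1 else 0

noncomputable def Sg (d : ℕ) (g : Finset EdgeT) : Fin (d-1) → Finset (Fin (d-1)) :=
  fun j => Finset.univ.filter (fun k => Sum.inr ((j:ℕ)+1, (k:ℕ)+1) ∈ g)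

lemma layer_extract (d : ℕ) (g : Finset EdgeT) (hg : IsCycle d g) :
    ∀ t : ℕ, t ≤ d - 1 → ∀ p : Fin d,
      layer d (xg d g) (Sg d g) t p = (if Sum.inl (t+1, (p:ℕ)+1) ∈ g then 1 else 0) := by
  intro t
  induction t with
  | zero =>
    intro _ p
    rw [layer_zero]
    rfl
  | succ t ih =>
    intro ht p
    have ht' : t < d - 1 := by omega
    rw [layer_succ, Pi.add_apply, ih (by omega) p]
    have hext : extS d (Sg d g) t = Sg d g ⟨t, ht'⟩ := by
      unfold extS; rw [dif_pos ht']
    -- cycle condition at site (t+1, p+1)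
    have hcyc := hg.2 (t+1) (by rw [Finset.mem_Icc]; omega) ((p:ℕ)+1)
      (by rw [Finset.mem_Icc]; have := p.isLt; omega)
    rw [card_filter_incident d g (t+1) ((p:ℕ)+1) (by omega), even_four] at hcyc
    have hpm1 : (p:ℕ) + 1 - 1 = (p:ℕ) := by omega
    rw [hpm1] at hcyc
    rw [hext, tvec_apply]
    -- identify the two vertical indicator terms
    have hv1 : (if h : (p:ℕ) < d - 1 then
        (if (⟨(p:ℕ), h⟩ : Fin (d-1)) ∈ Sg d g ⟨t, ht'⟩ then (1:Fin 2) else 0) else 0)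
        = (if Sum.inr (t+1, (p:ℕ)+1) ∈ g then 1 else 0) := by
      by_cases h : (p:ℕ) < d - 1
      · rw [dif_pos h]
        unfold Sg
        simp
      · rw [dif_neg h]
        have : Sum.inr ((t+1 : ℕ), (p:ℕ)+1) ∉ g := by
          intro hin
          have := (mem_edges_inr d _).mp (hg.1 hin)
          rw [mem_vedges] at this
          simp at this
          omega
        simp [this]
    have hv2 : (if h : 1 ≤ (p:ℕ) ∧ (p:ℕ) - 1 < d - 1 then
        (if (⟨(p:ℕ)-1, h.2⟩ : Fin (d-1)) ∈ Sg d g ⟨t, ht'⟩ then (1:Fin 2) else 0) else 0)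
        = (if Sum.inr (t+1, (p:ℕ)) ∈ g then 1 else 0) := by
      by_cases h : 1 ≤ (p:ℕ) ∧ (p:ℕ) - 1 < d - 1
      · rw [dif_pos h]
        unfold Sg
        have : (⟨(p:ℕ)-1, h.2⟩ : Fin (d-1)) ∈ Finset.univ.filter
            (fun k : Fin (d-1) => Sum.inr ((t:ℕ)+1, (k:ℕ)+1) ∈ g)
            ↔ Sum.inr ((t+1:ℕ), (p:ℕ)) ∈ g := by
          simp only [Finset.mem_filter, Finset.mem_univ, true_and]
          have : (p:ℕ) - 1 + 1 = (p:ℕ) := by omega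
          rw [this]
        rw [if_congr this rfl rfl]
      · rw [dif_neg h]
        have : Sum.inr ((t+1 : ℕ), (p:ℕ)) ∉ g := by
          intro hin
          have := (mem_edges_inr d _).mp (hg.1 hin)
          rw [mem_vedges] at this
          simp at this
          omega
        simp [this]
    rw [hv1, hv2]
    rw [show t + 1 + 1 = t + 2 from rfl] at hcyc
    rw [hcyc]
    abel

end SC

namespace SC
open Finset

lemma lbitN_eq (d : ℕ) (x₀ : Fin d → Fin 2) (S : Fin (d-1) → Finset (Fin (d-1)))
    (j : ℕ) (i : Fin d) : lbitN d x₀ S j ((i:ℕ)+1) = layer d x₀ S (j-1) i := by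
  unfold lbitN
  rw [dif_pos (show (i:ℕ)+1-1 < d by have := i.isLt; omega)]
  congr 1

lemma vbitN_iff (d : ℕ) (S : Fin (d-1) → Finset (Fin (d-1))) (j k : Fin (d-1)) :
    vbitN d S ((j:ℕ)+1) ((k:ℕ)+1) ↔ k ∈ S j := by
  unfold vbitN
  rw [dif_pos (show (k:ℕ)+1-1 < d-1 by have := k.isLt; omega)]
  unfold extS
  rw [dif_pos (show (j:ℕ)+1-1 < d-1 by have := j.isLt; omega)]
  have h1 : (⟨(k:ℕ)+1-1, by have := k.isLt; omega⟩ : Fin (d-1)) = k := by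
    simp
  have h2 : (⟨(j:ℕ)+1-1, by have := j.isLt; omega⟩ : Fin (d-1)) = j := by
    simp
  rw [h1, h2]

lemma xg_gconf (d : ℕ) (hd : 2 ≤ d) (x₀ : Fin d → Fin 2)
    (S : Fin (d-1) → Finset (Fin (d-1))) : xg d (gconf d x₀ S) = x₀ := by
  funext i
  unfold xg
  rw [if_congr (mem_gconf_inl d x₀ S ((1:ℕ), (i:ℕ)+1)) rfl rfl]
  have hmem : ((1:ℕ), (i:ℕ)+1) ∈ Hedges d := by
    rw [mem_hedges]; have := i.isLt; omega
  have hlb : lbitN d x₀ S 1 ((i:ℕ)+1) = x₀ i := by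
    rw [lbitN_eq]
    show layer d x₀ S 0 i = x₀ i
    rw [layer_zero]
  simp only [hmem, true_and, hlb]
  exact ind2_fin _

lemma sg_gconf (d : ℕ) (hd : 2 ≤ d) (x₀ : Fin d → Fin 2)
    (S : Fin (d-1) → Finset (Fin (d-1))) : Sg d (gconf d x₀ S) = S := by
  funext j
  unfold Sg
  ext k
  simp only [Finset.mem_filter, Finset.mem_univ, true_and]
  rw [mem_gconf_inr]
  have hmem : ((j:ℕ)+1, (k:ℕ)+1) ∈ Vedges d := by
    rw [mem_vedges]; have := j.isLt; have := k.isLt; omega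
  simp only [hmem, true_and]
  exact vbitN_iff d S j k

lemma gconf_extract (d : ℕ) (hd : 2 ≤ d) (g : Finset EdgeT) (hg : IsCycle d g) :
    gconf d (xg d g) (Sg d g) = g := by
  ext e
  cases e with
  | inl p =>
    obtain ⟨a, b⟩ := p
    rw [mem_gconf_inl]
    constructor
    · rintro ⟨hmem, hbit⟩
      rw [mem_hedges] at hmem
      simp only at hmem hbit
      have hb : b - 1 < d := by omega
      unfold lbitN at hbit
      rw [dif_pos hb] at hbit
      rw [layer_extract d g hg (a-1) (by omega) ⟨b-1, hb⟩] at hbit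
      simp only at hbit
      rw [show a - 1 + 1 = a by omega, show b - 1 + 1 = b by omega] at hbit
      by_contra hne
      rw [if_neg hne] at hbit
      exact absurd hbit (by decide)
    · intro heg
      have hEd := (mem_edges_inl d (a,b)).mp (hg.1 heg)
      refine ⟨hEd, ?_⟩
      rw [mem_hedges] at hEd
      simp only at hEd
      have hb : b - 1 < d := by omega
      unfold lbitN
      rw [dif_pos hb]
      rw [layer_extract d g hg (a-1) (by omega) ⟨b-1, hb⟩]
      simp only
      rw [show a - 1 + 1 = a by omega, show b - 1 + 1 = b by omega, if_pos heg]
  | inr p =>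
    obtain ⟨a, b⟩ := p
    rw [mem_gconf_inr]
    constructor
    · rintro ⟨hmem, hbit⟩
      rw [mem_vedges] at hmem
      simp only at hmem hbit
      unfold vbitN at hbit
      rw [dif_pos (show b - 1 < d - 1 by omega)] at hbit
      unfold extS at hbit
      rw [dif_pos (show a - 1 < d - 1 by omega)] at hbit
      unfold Sg at hbit
      rw [Finset.mem_filter] at hbit
      have := hbit.2
      simpa [show a - 1 + 1 = a by omega, show b - 1 + 1 = b by omega] using this
    · intro heg
      have hEd := (mem_edges_inr d (a,b)).mp (hg.1 heg)
      refine ⟨hEd, ?_⟩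
      rw [mem_vedges] at hEd
      simp only at hEd
      unfold vbitN
      rw [dif_pos (show b - 1 < d - 1 by omega)]
      unfold extS
      rw [dif_pos (show a - 1 < d - 1 by omega)]
      unfold Sg
      rw [Finset.mem_filter]
      refine ⟨Finset.mem_univ _, ?_⟩
      simpa [show a - 1 + 1 = a by omega, show b - 1 + 1 = b by omega] using heg

lemma prod_Icc_one {M : Type*} [CommMonoid M] (n : ℕ) (f : ℕ → M) :
    ∏ i ∈ Finset.Icc 1 n, f i = ∏ i : Fin n, f ((i:ℕ)+1) := by
  rw [Fin.prod_univ_eq_prod_range (fun i => f (i+1)) n]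
  rw [← Finset.Ico_add_one_right_eq_Icc, Finset.prod_Ico_eq_prod_range]
  exact Finset.prod_congr (by norm_num) (fun i _ => by rw [add_comm])

lemma gconf_weight (d : ℕ) (hd : 2 ≤ d) (w : EdgeT → ℝ) (x₀ : Fin d → Fin 2)
    (S : Fin (d-1) → Finset (Fin (d-1))) :
    (∏ e ∈ gconf d x₀ S, ((w e : ℝ) : ℂ))
      = hwC d w d (layer d x₀ S (d-1)) *
        ∏ j : Fin (d-1),
          (wcol d w ((j:ℕ)+1) (S j) * hwC d w ((j:ℕ)+1) (layer d x₀ S (j:ℕ))) := by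
  unfold gconf
  have hdisj : Disjoint
      (((Hedges d).filter (fun p => lbitN d x₀ S p.1 p.2 = 1)).map
        ⟨Sum.inl, Sum.inl_injective⟩)
      (((Vedges d).filter (fun p => vbitN d S p.1 p.2)).map ⟨Sum.inr, Sum.inr_injective⟩) := by
    rw [Finset.disjoint_left]
    intro e he1 he2
    rw [Finset.mem_map] at he1 he2
    obtain ⟨p, _, rfl⟩ := he1
    obtain ⟨q, _, hq⟩ := he2
    exact absurd hq (by simp)
  rw [Finset.prod_union hdisj, Finset.prod_map, Finset.prod_map]
  have hH : (∏ p ∈ (Hedges d).filter (fun p => lbitN d x₀ S p.1 p.2 = 1),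
        ((w ((⟨Sum.inl, Sum.inl_injective⟩ : ℕ × ℕ ↪ EdgeT) p) : ℝ) : ℂ))
      = ∏ j ∈ Finset.Icc 1 d, hwC d w j (layer d x₀ S (j-1)) := by
    rw [Finset.prod_filter]
    unfold Hedges
    rw [Finset.prod_product]
    apply Finset.prod_congr rfl
    intro j _
    rw [prod_Icc_one]
    unfold hwC
    apply Finset.prod_congr rfl
    intro i _
    rw [lbitN_eq]
    rcases fin2_cases (layer d x₀ S (j-1) i) with h | h <;> simp [h]
  have hV : (∏ p ∈ (Vedges d).filter (fun p => vbitN d S p.1 p.2),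
        ((w ((⟨Sum.inr, Sum.inr_injective⟩ : ℕ × ℕ ↪ EdgeT) p) : ℝ) : ℂ))
      = ∏ j : Fin (d-1), wcol d w ((j:ℕ)+1) (S j) := by
    rw [Finset.prod_filter]
    unfold Vedges
    rw [Finset.prod_product, prod_Icc_one]
    apply Finset.prod_congr rfl
    intro j _
    rw [prod_Icc_one]
    unfold wcol
    rw [show S j = Finset.univ.filter (fun k => k ∈ S j) from by ext k; simp]
    rw [Finset.prod_filter]
    apply Finset.prod_congr rfl
    intro k _
    rw [if_congr (vbitN_iff d S j k) rfl rfl]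
    simp
  rw [hH, hV]
  have hsplit : (∏ j ∈ Finset.Icc 1 d, hwC d w j (layer d x₀ S (j-1)))
      = (∏ j ∈ Finset.Icc 1 (d-1), hwC d w j (layer d x₀ S (j-1)))
          * hwC d w d (layer d x₀ S (d-1)) := by
    rw [show Finset.Icc 1 d = insert d (Finset.Icc 1 (d-1)) from by
      ext a; simp [Finset.mem_Icc, Finset.mem_insert]; omega]
    rw [Finset.prod_insert (by simp [Finset.mem_Icc]; omega)]
    ring
  rw [hsplit, prod_Icc_one (d-1) (fun j => hwC d w j (layer d x₀ S (j-1)))]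
  rw [Finset.prod_mul_distrib]
  have hconv : (∏ x : Fin (d-1), hwC d w ((x:ℕ)+1) (layer d x₀ S ((x:ℕ)+1-1)))
      = ∏ x : Fin (d-1), hwC d w ((x:ℕ)+1) (layer d x₀ S (x:ℕ)) :=
    Finset.prod_congr rfl (fun j _ => rfl)
  rw [hconv]
  ring

end SC

namespace SC
open Finset

lemma psiE_star (d : ℕ) (x : Fin d → Fin 2) : star (psiE d x) = psiE d x := by
  unfold psiE; split <;> simp

lemma psiE_sq (d : ℕ) (x : Fin d → Fin 2) : psiE d x * psiE d x = psiE d x := by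
  unfold psiE; split <;> simp

lemma ind_nat_fin (P : Prop) [Decidable P] :
    (if P then (1:ℕ) else 0) = (((if P then (1:Fin 2) else 0) : Fin 2) : ℕ) := by
  by_cases h : P <;> simp [h]

end SC


open SC Finset

/-- `Z(w) = ∑_{g ∈ 𝒢} ∏_{e ∈ g} w_e`, where `𝒢` is the set of cycles `g`
with `|g ∩ H^j|` even for every `j = 1,…,d`, equals the matrix element
`⟨ψ_e| Ĥ^d V̂^{d−1} ⋯ Ĥ^2 V̂^1 Ĥ^1 |ψ_e⟩`. -/
theorem loop_sum_eq_matchgate_matrix_element (d : ℕ) (hd : 2 ≤ d) (w : EdgeT → ℝ) :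
    ((∑ g ∈ (Edges d).powerset.filter (fun g => IsCycle d g ∧ EvenHColumns d g),
        ∏ e ∈ g, w e : ℝ) : ℂ) =
      ∑ x : Fin d → Fin 2, ∑ y : Fin d → Fin 2,
        star (psiE d x) * circuitU d w x y * psiE d y := by
  classical
  -- Step 1: rewrite the matrix element using Zvec
  have hrhs1 : (∑ x : Fin d → Fin 2, ∑ y : Fin d → Fin 2,
      star (psiE d x) * circuitU d w x y * psiE d y)
      = ∑ x : Fin d → Fin 2, psiE d x * (hwC d w d x * Zvec d w (d-1) x) := by
    apply Finset.sum_congr rfl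
    intro x _
    have h1 : (∑ y : Fin d → Fin 2, star (psiE d x) * circuitU d w x y * psiE d y)
        = psiE d x * ((circuitU d w).mulVec (psiE d) x) := by
      rw [psiE_star]
      unfold Matrix.mulVec dotProduct
      rw [Finset.mul_sum]
      exact Finset.sum_congr rfl (fun y _ => by ring)
    rw [h1]
    have h2 : (circuitU d w).mulVec (psiE d) = (Hop d w d).mulVec (Zvec d w (d-1)) := by
      show (Hop d w d * Pprod d w (d-1)).mulVec (psiE d) = _
      rw [← Matrix.mulVec_mulVec]
      rfl
    rw [h2, hop_mulVec]
  rw [hrhs1]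
  -- Step 2: insert the closed form of Zvec and collapse the x-sum
  have hrhs2 : (∑ x : Fin d → Fin 2, psiE d x * (hwC d w d x * Zvec d w (d-1) x))
      = ∑ x₀ : Fin d → Fin 2, ∑ S : Fin (d-1) → Finset (Fin (d-1)),
          psiE d x₀ *
            (hwC d w d (layer d x₀ S (d-1)) *
              ∏ j : Fin (d-1), (wcol d w ((j:ℕ)+1) (S j)
                * hwC d w ((j:ℕ)+1) (layer d x₀ S (j:ℕ)))) := by
    have hcf := zvec_closed d w (d-1)
    simp only [hcf]
    simp only [Finset.mul_sum]
    rw [Finset.sum_comm]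
    apply Finset.sum_congr rfl
    intro x₀ _
    rw [Finset.sum_comm]
    apply Finset.sum_congr rfl
    intro S _
    simp only [mul_ite, mul_one, mul_zero]
    rw [Finset.sum_ite_eq' Finset.univ (layer d x₀ S (d-1))
      (fun x => psiE d x * (hwC d w d x *
        (psiE d x₀ * ∏ j : Fin (d-1), wcol d w ((j:ℕ)+1) (S j)
          * hwC d w ((j:ℕ)+1) (layer d x₀ S (j:ℕ)))))]
    rw [if_pos (Finset.mem_univ _)]
    rw [psiE_layer]
    calc psiE d x₀ * (hwC d w d (layer d x₀ S (d-1)) *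
          (psiE d x₀ * ∏ j : Fin (d-1), wcol d w ((j:ℕ)+1) (S j)
            * hwC d w ((j:ℕ)+1) (layer d x₀ S (j:ℕ))))
        = (psiE d x₀ * psiE d x₀) * (hwC d w d (layer d x₀ S (d-1)) *
            (∏ j : Fin (d-1), wcol d w ((j:ℕ)+1) (S j)
              * hwC d w ((j:ℕ)+1) (layer d x₀ S (j:ℕ)))) := by ring
      _ = _ := by rw [psiE_sq]
  rw [hrhs2]
  -- Step 3: restrict to even-parity x₀
  have hrhs3 : (∑ x₀ : Fin d → Fin 2, ∑ S : Fin (d-1) → Finset (Fin (d-1)),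
        psiE d x₀ *
          (hwC d w d (layer d x₀ S (d-1)) *
            ∏ j : Fin (d-1), (wcol d w ((j:ℕ)+1) (S j)
              * hwC d w ((j:ℕ)+1) (layer d x₀ S (j:ℕ)))))
      = ∑ c ∈ ((Finset.univ.filter (fun x₀ : Fin d → Fin 2 => Even (∑ i, ((x₀ i : ℕ))))) ×ˢ
            (Finset.univ : Finset (Fin (d-1) → Finset (Fin (d-1))))),
          (hwC d w d (layer d c.1 c.2 (d-1)) *
            ∏ j : Fin (d-1), (wcol d w ((j:ℕ)+1) (c.2 j)
              * hwC d w ((j:ℕ)+1) (layer d c.1 c.2 (j:ℕ)))) := by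
    rw [Finset.sum_product, Finset.sum_filter]
    apply Finset.sum_congr rfl
    intro x₀ _
    unfold psiE
    by_cases h : Even (∑ i, ((x₀ i : ℕ)))
    · simp only [h, if_true, one_mul]
    · simp only [h, if_false, zero_mul, Finset.sum_const_zero]
  rw [hrhs3]
  -- Step 4: the bijection between cycle configurations and lattice paths
  have hcast : ((∑ g ∈ (Edges d).powerset.filter
        (fun g => IsCycle d g ∧ EvenHColumns d g), ∏ e ∈ g, w e : ℝ) : ℂ)
      = ∑ g ∈ (Edges d).powerset.filter (fun g => IsCycle d g ∧ EvenHColumns d g),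
          ∏ e ∈ g, ((w e : ℝ) : ℂ) := by
    push_cast
    rfl
  rw [hcast]
  refine (Finset.sum_nbij' (fun c => gconf d c.1 c.2) (fun g => (xg d g, Sg d g))
    ?_ ?_ ?_ ?_ ?_).symm
  · -- forward membership
    intro c hc
    rw [Finset.mem_product, Finset.mem_filter] at hc
    rw [Finset.mem_filter, Finset.mem_powerset]
    exact ⟨gconf_subset d c.1 c.2, gconf_cycle d c.1 c.2, gconf_evenH d c.1 c.2 hc.1.2⟩
  · -- backward membership
    intro g hgm
    rw [Finset.mem_filter, Finset.mem_powerset] at hgm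
    have hsub := hgm.1
    have hev := hgm.2.2
    rw [Finset.mem_product]
    refine ⟨?_, Finset.mem_univ _⟩
    rw [Finset.mem_filter]
    refine ⟨Finset.mem_univ _, ?_⟩
    have h1 := hev 1 (by rw [Finset.mem_Icc]; omega)
    rw [card_filter_hcol d g hsub 1] at h1
    have hterm : ∀ i : Fin d,
        (if Sum.inl ((1:ℕ),(i:ℕ)+1) ∈ g then (1:ℕ) else 0) = ((xg d g i : ℕ)) := by
      intro i
      rw [ind_nat_fin]
      rfl
    rwa [Finset.sum_congr rfl (fun i _ => hterm i)] at h1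
  · -- left inverse
    intro c hc
    obtain ⟨x₀, S⟩ := c
    simp only [Prod.mk.injEq]
    exact ⟨xg_gconf d hd x₀ S, sg_gconf d hd x₀ S⟩
  · -- right inverse
    intro g hgm
    rw [Finset.mem_filter, Finset.mem_powerset] at hgm
    exact gconf_extract d hd g hgm.2.1
  · -- weights agree
    intro c hc
    exact (gconf_weight d hd w c.1 c.2).symm
end

section
/- Let d ≥ 2. For any subset T ⊆ H of horizontal edges such that |T ∩ H^j| is even for every j = 1,…,d, there exists a unique cycle g ⊆ H ∪ V with g ∩ H = T. -/
open scoped Classical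

noncomputable section

def Scount (T : Finset (ℕ × ℕ)) (j k : ℕ) : ℕ :=
  (T.filter (fun h => (h.1 = j ∨ h.1 = j + 1) ∧ h.2 ≤ k)).card

lemma Scount_zero {d : ℕ} {T : Finset (ℕ × ℕ)} (hT : T ⊆ Hedges d) (j : ℕ) :
    Scount T j 0 = 0 := by
  rw [Scount, Finset.card_eq_zero, Finset.filter_eq_empty_iff]
  intro h hh
  have := hT hh
  simp only [Hedges, Finset.mem_product, Finset.mem_Icc] at this
  omega

lemma Scount_succ (T : Finset (ℕ × ℕ)) (j k : ℕ) :
    Scount T j (k + 1)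
      = Scount T j k + (T.filter (fun h => (h.1 = j ∨ h.1 = j + 1) ∧ h.2 = k + 1)).card := by
  rw [Scount, Scount, ← Finset.card_union_of_disjoint, ← Finset.filter_or]
  · congr 1
    apply Finset.filter_congr
    intro x _
    omega
  · rw [Finset.disjoint_left]
    intro a ha hb
    simp only [Finset.mem_filter] at ha hb
    omega

lemma Scount_top {d : ℕ} {T : Finset (ℕ × ℕ)} (hT : T ⊆ Hedges d)
    (hTeven : ∀ j ∈ Finset.Icc 1 d, Even (T.filter (fun e => e.1 = j)).card)
    {j : ℕ} (hj1 : 1 ≤ j) (hj2 : j + 1 ≤ d) : Even (Scount T j d) := by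
  have h1 : Scount T j d
      = (T.filter (fun h => h.1 = j)).card + (T.filter (fun h => h.1 = j + 1)).card := by
    rw [Scount, ← Finset.card_union_of_disjoint, ← Finset.filter_or]
    · congr 1
      apply Finset.filter_congr
      intro x hx
      have := hT hx
      simp only [Hedges, Finset.mem_product, Finset.mem_Icc] at this
      omega
    · rw [Finset.disjoint_left]
      intro a ha hb
      simp only [Finset.mem_filter] at ha hb
      omega
  rw [h1]
  exact (hTeven j (by simp only [Finset.mem_Icc]; omega)).add
    (hTeven (j + 1) (by simp only [Finset.mem_Icc]; omega))

lemma inr_mem_edges {d : ℕ} {v : ℕ × ℕ} : Sum.inr v ∈ Edges d ↔ v ∈ Vedges d := by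
  simp [Edges]

lemma card_pair_filter {a b : ℕ × ℕ} (hab : a ≠ b) (W : Finset (ℕ × ℕ)) :
    (({a, b} : Finset (ℕ × ℕ)).filter (· ∈ W)).card
      = (if a ∈ W then 1 else 0) + (if b ∈ W then 1 else 0) := by
  rw [Finset.filter_insert, Finset.filter_singleton]
  split_ifs <;> simp_all [Finset.card_pair hab]

lemma card_incident {d : ℕ} {T : Finset (ℕ × ℕ)}
    {g : Finset EdgeT} (hg : g ⊆ Edges d)
    (hH : ∀ p : ℕ × ℕ, Sum.inl p ∈ g ↔ p ∈ T) (j i : ℕ) (hi : 1 ≤ i) :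
    (g.filter (fun e => Incident (j, i) e)).card
      = (T.filter (fun h => (h.1 = j ∨ h.1 = j + 1) ∧ h.2 = i)).card
        + ((if Sum.inr (j, i - 1) ∈ g then 1 else 0)
            + (if Sum.inr (j, i) ∈ g then 1 else 0)) := by
  classical
  set W : Finset (ℕ × ℕ) := (Vedges d).filter (fun v => Sum.inr v ∈ g) with hW
  have hmemW : ∀ v : ℕ × ℕ, v ∈ W ↔ Sum.inr v ∈ g := by
    intro v
    simp only [hW, Finset.mem_filter, and_iff_right_iff_imp]
    intro h
    exact inr_mem_edges.mp (hg h)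
  have hdecomp : g = T.map ⟨Sum.inl, Sum.inl_injective⟩ ∪ W.map ⟨Sum.inr, Sum.inr_injective⟩ := by
    ext e
    cases e with
    | inl p => simp [← hH p]
    | inr v => simp [hmemW v]
  rw [hdecomp, Finset.filter_union, Finset.card_union_of_disjoint, Finset.filter_map,
    Finset.filter_map, Finset.card_map, Finset.card_map]
  · have e1 : Finset.filter ((fun e => Incident (j, i) e) ∘ (⟨Sum.inl, Sum.inl_injective⟩ : (ℕ × ℕ) ↪ EdgeT)) T
        = T.filter (fun h => (h.1 = j ∨ h.1 = j + 1) ∧ h.2 = i) := by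
      apply Finset.filter_congr
      intro x _
      simp [Incident]
    have e2 : Finset.filter ((fun e => Incident (j, i) e) ∘ (⟨Sum.inr, Sum.inr_injective⟩ : (ℕ × ℕ) ↪ EdgeT)) W
        = ({(j, i - 1), (j, i)} : Finset (ℕ × ℕ)).filter (· ∈ W) := by
      ext ⟨a, b⟩
      simp only [Finset.mem_filter]
      simp only [Finset.mem_filter, Finset.mem_insert, Finset.mem_singleton,
        Function.comp_apply, Function.Embedding.coeFn_mk, Incident, Prod.mk.injEq]
      constructor
      · rintro ⟨hw, rfl, hb⟩
        exact ⟨by omega, hw⟩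
      · rintro ⟨hab, hw⟩
        exact ⟨hw, by omega, by omega⟩
    rw [e1, e2, card_pair_filter (by simp only [ne_eq, Prod.mk.injEq]; omega) W]
    simp only [hmemW]
    rw [← hdecomp]
  · rw [Finset.disjoint_left]
    rintro e he hf
    simp only [Finset.mem_filter, Finset.mem_map] at he hf
    obtain ⟨⟨x, -, rfl⟩, -⟩ := he
    obtain ⟨⟨y, -, hy⟩, -⟩ := hf
    exact absurd hy (by simp)

def cyc (d : ℕ) (T : Finset (ℕ × ℕ)) : Finset EdgeT :=
  T.map ⟨Sum.inl, Sum.inl_injective⟩ ∪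
    ((Vedges d).filter (fun v => Odd (Scount T v.1 v.2))).map ⟨Sum.inr, Sum.inr_injective⟩

lemma cyc_inl {d : ℕ} {T : Finset (ℕ × ℕ)} (p : ℕ × ℕ) :
    Sum.inl p ∈ cyc d T ↔ p ∈ T := by
  simp [cyc]

lemma cyc_inr {d : ℕ} {T : Finset (ℕ × ℕ)} (v : ℕ × ℕ) :
    Sum.inr v ∈ cyc d T ↔ v ∈ Vedges d ∧ Odd (Scount T v.1 v.2) := by
  simp [cyc]

lemma cyc_subset {d : ℕ} {T : Finset (ℕ × ℕ)} (hT : T ⊆ Hedges d) :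
    cyc d T ⊆ Edges d :=
  Finset.union_subset
    ((Finset.map_subset_map.mpr hT).trans Finset.subset_union_left)
    ((Finset.map_subset_map.mpr (Finset.filter_subset _ _)).trans Finset.subset_union_right)

lemma even_ind {d : ℕ} (hd : 2 ≤ d) {T : Finset (ℕ × ℕ)} (hT : T ⊆ Hedges d)
    (hTeven : ∀ j ∈ Finset.Icc 1 d, Even (T.filter (fun e => e.1 = j)).card)
    {j : ℕ} (hj1 : 1 ≤ j) (hj2 : j ≤ d - 1) {k : ℕ} (hk : k ≤ d) :
    Even ((if Sum.inr (j, k) ∈ cyc d T then 1 else 0) + Scount T j k) := by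
  have hmem := cyc_inr (d := d) (T := T) (j, k)
  rcases Nat.eq_zero_or_pos k with rfl | hk1
  · have hnot : ¬ Sum.inr (j, 0) ∈ cyc d T := by
      rw [hmem]
      rintro ⟨hv, -⟩
      simp only [Vedges, Finset.mem_product, Finset.mem_Icc] at hv
      omega
    simp [hnot, Scount_zero hT]
  · by_cases hkd : k ≤ d - 1
    · have hv : (j, k) ∈ Vedges d := by
        simp only [Vedges, Finset.mem_product, Finset.mem_Icc]
        omega
      by_cases ho : Odd (Scount T j k)
      · have hin : Sum.inr (j, k) ∈ cyc d T := hmem.mpr ⟨hv, ho⟩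
        rw [Nat.odd_iff] at ho
        rw [if_pos hin, Nat.even_iff]
        omega
      · have hnot : ¬ Sum.inr (j, k) ∈ cyc d T := fun h => ho (hmem.mp h).2
        rw [if_neg hnot, zero_add]
        exact Nat.not_odd_iff_even.mp ho
    · have hkd' : k = d := by omega
      have hnot : ¬ Sum.inr (j, k) ∈ cyc d T := by
        rw [hmem]
        rintro ⟨hv, -⟩
        simp only [Vedges, Finset.mem_product, Finset.mem_Icc] at hv
        omega
      rw [if_neg hnot, zero_add, hkd']
      exact Scount_top hT hTeven hj1 (by omega)

lemma cyc_isCycle {d : ℕ} (hd : 2 ≤ d) {T : Finset (ℕ × ℕ)} (hT : T ⊆ Hedges d)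
    (hTeven : ∀ j ∈ Finset.Icc 1 d, Even (T.filter (fun e => e.1 = j)).card) :
    IsCycle d (cyc d T) := by
  refine ⟨cyc_subset hT, ?_⟩
  intro j hj i hi
  simp only [Finset.mem_Icc] at hj hi
  obtain ⟨i, rfl⟩ : ∃ i', i = i' + 1 := ⟨i - 1, by omega⟩
  rw [card_incident (cyc_subset hT) (fun p => cyc_inl p) j (i + 1) (by omega)]
  have h1 := even_ind hd hT hTeven hj.1 hj.2 (k := i) (by omega)
  have h2 := even_ind hd hT hTeven hj.1 hj.2 (k := i + 1) (by omega)
  have hS := Scount_succ T j i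
  simp only [Nat.add_sub_cancel]
  rw [Nat.even_iff] at h1 h2 ⊢
  omega

lemma vert_char {d : ℕ} (hd : 2 ≤ d) {T : Finset (ℕ × ℕ)} (hT : T ⊆ Hedges d)
    {g : Finset EdgeT} (hg : IsCycle d g)
    (hH : ∀ p : ℕ × ℕ, Sum.inl p ∈ g ↔ p ∈ T)
    {j : ℕ} (hj1 : 1 ≤ j) (hj2 : j ≤ d - 1) :
    ∀ k, k ≤ d - 1 → (Sum.inr (j, k) ∈ g ↔ 1 ≤ k ∧ Odd (Scount T j k)) := by
  intro k
  induction k with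
  | zero =>
    intro _
    constructor
    · intro hmemg
      have := inr_mem_edges.mp (hg.1 hmemg)
      simp only [Vedges, Finset.mem_product, Finset.mem_Icc] at this
      omega
    · rintro ⟨h, -⟩
      omega
  | succ k ih =>
    intro hk
    have hk' := ih (by omega)
    have hparity := hg.2 j (by simp only [Finset.mem_Icc]; omega) (k + 1)
      (by simp only [Finset.mem_Icc]; omega)
    rw [card_incident hg.1 hH j (k + 1) (by omega)] at hparity
    simp only [Nat.add_sub_cancel] at hparity
    have hS := Scount_succ T j k
    have hA : (if Sum.inr (j, k) ∈ g then 1 else 0) % 2 = Scount T j k % 2 := by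
      by_cases h : Sum.inr (j, k) ∈ g
      · have ho := (hk'.mp h).2
        rw [Nat.odd_iff] at ho
        simp [h, ho]
      · rw [if_neg h]
        rcases Nat.eq_zero_or_pos k with rfl | hk1
        · rw [Scount_zero hT]
        · have hno : ¬ Odd (Scount T j k) := fun ho => h (hk'.mpr ⟨hk1, ho⟩)
          rw [Nat.odd_iff] at hno
          omega
    rw [Nat.even_iff] at hparity
    by_cases hB : Sum.inr (j, k + 1) ∈ g
    · simp only [hB, true_iff]
      refine ⟨by omega, ?_⟩
      rw [Nat.odd_iff]
      rw [if_pos hB] at hparity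
      omega
    · simp only [hB, false_iff, not_and]
      intro _
      rw [Nat.odd_iff]
      rw [if_neg hB] at hparity
      omega

/-- For every subset `T ⊆ H` of horizontal edges such that `|T ∩ H^j|` is
even for every `j = 1,…,d`, there exists a unique cycle `g ⊆ H ∪ V` with `g ∩ H = T`. -/
theorem exists_unique_cycle_with_horizontal_part (d : ℕ) (hd : 2 ≤ d)
    (T : Finset (ℕ × ℕ)) (hT : T ⊆ Hedges d)
    (hTeven : ∀ j ∈ Finset.Icc 1 d, Even (T.filter (fun e => e.1 = j)).card) :
    ∃! g : Finset EdgeT, IsCycle d g ∧ ∀ p : ℕ × ℕ, Sum.inl p ∈ g ↔ p ∈ T := by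
  refine ⟨cyc d T, ⟨cyc_isCycle hd hT hTeven, fun p => cyc_inl p⟩, ?_⟩
  rintro g ⟨hg, hgH⟩
  apply Finset.ext
  intro e
  cases e with
  | inl p => rw [hgH p, cyc_inl]
  | inr v =>
    obtain ⟨a, b⟩ := v
    have hcy := cyc_isCycle hd hT hTeven
    constructor
    · intro hmemg
      have hv := inr_mem_edges.mp (hg.1 hmemg)
      have hv' := hv
      simp only [Vedges, Finset.mem_product, Finset.mem_Icc] at hv'
      exact (vert_char hd hT hcy (fun p => cyc_inl p) hv'.1.1 hv'.1.2 b hv'.2.2).mpr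
        ((vert_char hd hT hg hgH hv'.1.1 hv'.1.2 b hv'.2.2).mp hmemg)
    · intro hmemc
      have hv := inr_mem_edges.mp (hcy.1 hmemc)
      have hv' := hv
      simp only [Vedges, Finset.mem_product, Finset.mem_Icc] at hv'
      exact (vert_char hd hT hg hgH hv'.1.1 hv'.1.2 b hv'.2.2).mpr
        ((vert_char hd hT hcy (fun p => cyc_inl p) hv'.1.1 hv'.1.2 b hv'.2.2).mp hmemc)
end
end

section
/- Let d ≥ 2. Let 𝒢^X be the collection of all subsets of H ∪ V obtained as the symmetric difference of an arbitrary family of plaquette boundaries (equivalently, the ZMod 2 span of the plaquette boundaries, with addition given by symmetric difference). Then 𝒢^X is exactly the set of cycles g ⊆ H ∪ V such that |g ∩ H^j| is even for every j = 1,…,d. -/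
open scoped Classical

/-- The boundary of the plaquette `(j, i)` (with `1 ≤ j ≤ d`, `1 ≤ i ≤ d−1`): the horizontal
edges `(j, i)` and `(j, i+1)` of `H^j` together with those vertical edges among `(j−1, i)`
and `(j, i)` whose first coordinate lies in `{1,…,d−1}`. -/
def plaqBoundary (d : ℕ) (j i : ℕ) : Finset EdgeT :=
  {Sum.inl (j, i), Sum.inl (j, i + 1)} ∪
    (if 1 ≤ j - 1 ∧ j - 1 ≤ d - 1 then {Sum.inr (j - 1, i)} else ∅) ∪
    (if 1 ≤ j ∧ j ≤ d - 1 then {Sum.inr (j, i)} else ∅)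

/-- The indicator vector (over `ZMod 2`) of a set of edges; addition of indicator vectors
corresponds to symmetric difference of edge sets. -/
def indicatorFn (g : Finset EdgeT) : EdgeT → ZMod 2 := fun e => if e ∈ g then 1 else 0

namespace SCAux

lemma mem_edges_inl {d a b : ℕ} : (Sum.inl (a,b) : EdgeT) ∈ Edges d ↔ (1 ≤ a ∧ a ≤ d) ∧ (1 ≤ b ∧ b ≤ d) := by
  simp [Edges, Hedges, Vedges, Finset.mem_product, Finset.mem_Icc]

lemma mem_edges_inr {d a b : ℕ} : (Sum.inr (a,b) : EdgeT) ∈ Edges d ↔ (1 ≤ a ∧ a ≤ d - 1) ∧ (1 ≤ b ∧ b ≤ d - 1) := by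
  simp [Edges, Hedges, Vedges, Finset.mem_product, Finset.mem_Icc]

lemma mem_plaq_inl {d j i a b : ℕ} :
    (Sum.inl (a,b) : EdgeT) ∈ plaqBoundary d j i ↔ j = a ∧ (i = b ∨ i + 1 = b) := by
  simp only [plaqBoundary, Finset.mem_union, Finset.mem_insert, Finset.mem_singleton]
  split_ifs <;> simp_all <;> omega

lemma mem_plaq_inr {d j i a b : ℕ} :
    (Sum.inr (a,b) : EdgeT) ∈ plaqBoundary d j i ↔
      i = b ∧ ((j - 1 = a ∧ 1 ≤ j - 1 ∧ j - 1 ≤ d - 1) ∨ (j = a ∧ 1 ≤ j ∧ j ≤ d - 1)) := by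
  simp only [plaqBoundary, Finset.mem_union, Finset.mem_insert, Finset.mem_singleton]
  split_ifs <;> simp_all <;> omega

lemma plaq_subset {d j i : ℕ} (hj : 1 ≤ j) (hjd : j ≤ d) (hi : 1 ≤ i) (hid : i ≤ d - 1) :
    plaqBoundary d j i ⊆ Edges d := by
  intro e he
  rcases e with ⟨a,b⟩ | ⟨a,b⟩
  · rw [mem_plaq_inl] at he
    rw [mem_edges_inl]
    omega
  · rw [mem_plaq_inr] at he
    rw [mem_edges_inr]
    omega



lemma even_iff_zmod (n : ℕ) : Even n ↔ (n : ZMod 2) = 0 := by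
  rw [even_iff_two_dvd]
  exact (ZMod.natCast_eq_zero_iff n 2).symm

lemma card_filter_zmod {α : Type*} (s : Finset α) (p : α → Prop) [DecidablePred p] :
    (((s.filter p).card : ℕ) : ZMod 2) = ∑ e ∈ s, if p e then (1:ZMod 2) else 0 := by
  rw [Finset.card_filter]
  push_cast [apply_ite (Nat.cast : ℕ → ZMod 2)]
  rfl

lemma sum_plaq (d j i : ℕ) (f : EdgeT → ZMod 2) :
    ∑ e ∈ plaqBoundary d j i, f e =
      f (Sum.inl (j,i)) + f (Sum.inl (j,i+1)) +
      (if 1 ≤ j - 1 ∧ j - 1 ≤ d - 1 then f (Sum.inr (j-1,i)) else 0) +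
      (if 1 ≤ j ∧ j ≤ d - 1 then f (Sum.inr (j,i)) else 0) := by
  unfold plaqBoundary
  split_ifs with h1 h2 h2 <;>
    simp [Finset.sum_union, Finset.sum_insert, Finset.sum_pair, Finset.mem_insert,
      Finset.mem_singleton, Finset.mem_union]
  · rw [Finset.sum_pair (by simp; omega)]
    ring
  · ring
  · ring



lemma plaq_col_even (d j j' i' : ℕ) :
    (∑ e ∈ plaqBoundary d j' i', if InHCol j e then (1:ZMod 2) else 0) = 0 := by
  rw [sum_plaq]
  simp only [InHCol]
  split_ifs <;> simp_all <;> decide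

lemma plaq_site_even (d j i j' i' : ℕ) (hj1 : 1 ≤ j) (hjd : j ≤ d - 1) :
    (∑ e ∈ plaqBoundary d j' i', if Incident (j,i) e then (1:ZMod 2) else 0) = 0 := by
  rw [sum_plaq]
  unfold Incident
  split_ifs <;> first | rfl | decide | omega | (exfalso; omega) | simp_all <;> omega



def Pset (d : ℕ) : Finset (ℕ × ℕ) := Finset.Icc 1 d ×ˢ Finset.Icc 1 (d - 1)

lemma mem_Pset {d : ℕ} {p : ℕ × ℕ} :
    p ∈ Pset d ↔ (1 ≤ p.1 ∧ p.1 ≤ d) ∧ (1 ≤ p.2 ∧ p.2 ≤ d - 1) := by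
  simp [Pset, Finset.mem_product, Finset.mem_Icc]

lemma mem_span_iff (d : ℕ) (χ : EdgeT → ZMod 2) :
    χ ∈ Submodule.span (ZMod 2)
        {χ : EdgeT → ZMod 2 | ∃ j ∈ Finset.Icc 1 d, ∃ i ∈ Finset.Icc 1 (d - 1),
          χ = indicatorFn (plaqBoundary d j i)} ↔
      ∃ a : ℕ × ℕ → ZMod 2,
        χ = ∑ p ∈ Pset d, a p • indicatorFn (plaqBoundary d p.1 p.2) := by
  constructor
  · intro h
    induction h using Submodule.span_induction with
    | mem x hx =>
      obtain ⟨j, hj, i, hi, rfl⟩ := hx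
      refine ⟨fun q => if q = (j,i) then 1 else 0, ?_⟩
      rw [Finset.sum_congr rfl (fun p _ => by rw [ite_smul, one_smul, zero_smul]),
        Finset.sum_ite_eq' (Pset d) (j,i) (fun p => indicatorFn (plaqBoundary d p.1 p.2))]
      simp only [Finset.mem_Icc] at hj hi
      rw [if_pos (mem_Pset.2 ⟨hj, hi⟩)]
    | zero => exact ⟨0, by simp⟩
    | add x y _ _ hx hy =>
      obtain ⟨a, rfl⟩ := hx; obtain ⟨b, rfl⟩ := hy
      exact ⟨a + b, by simp [add_smul, Finset.sum_add_distrib]⟩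
    | smul c x _ hx =>
      obtain ⟨a, rfl⟩ := hx
      exact ⟨c • a, by simp [Finset.smul_sum, smul_smul]⟩
  · rintro ⟨a, rfl⟩
    refine Submodule.sum_mem _ (fun p hp => Submodule.smul_mem _ _ (Submodule.subset_span ?_))
    rw [mem_Pset] at hp
    exact ⟨p.1, Finset.mem_Icc.2 hp.1, p.2, Finset.mem_Icc.2 hp.2, rfl⟩



lemma zmod2_em (x : ZMod 2) : x = 0 ∨ x = 1 := by revert x; decide

lemma chi_apply (d : ℕ) (a : ℕ × ℕ → ZMod 2) (e : EdgeT) :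
    (∑ p ∈ Pset d, a p • indicatorFn (plaqBoundary d p.1 p.2)) e =
      ∑ p ∈ Pset d, a p * (if e ∈ plaqBoundary d p.1 p.2 then 1 else 0) := by
  rw [Finset.sum_apply]
  exact Finset.sum_congr rfl (fun p _ => rfl)

lemma chi_support (d : ℕ) (a : ℕ × ℕ → ZMod 2) (e : EdgeT) (he : e ∉ Edges d) :
    (∑ p ∈ Pset d, a p • indicatorFn (plaqBoundary d p.1 p.2)) e = 0 := by
  rw [chi_apply]
  refine Finset.sum_eq_zero (fun p hp => ?_)
  rw [mem_Pset] at hp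
  rw [if_neg (fun hmem => he (plaq_subset hp.1.1 hp.1.2 hp.2.1 hp.2.2 hmem)), mul_zero]

lemma parity_of_rep (d : ℕ) (a : ℕ × ℕ → ZMod 2) (Pred : EdgeT → Prop)
    (hplaq : ∀ p ∈ Pset d,
      (∑ e ∈ plaqBoundary d p.1 p.2, if Pred e then (1:ZMod 2) else 0) = 0) :
    Even (((Edges d).filter
        (fun e => (∑ p ∈ Pset d, a p • indicatorFn (plaqBoundary d p.1 p.2)) e = 1)).filter
        (fun e => Pred e)).card := by
  set χ := ∑ p ∈ Pset d, a p • indicatorFn (plaqBoundary d p.1 p.2) with hχ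
  rw [even_iff_zmod, card_filter_zmod, Finset.sum_filter]
  have step1 : ∀ e ∈ Edges d,
      (if χ e = 1 then (if Pred e then (1:ZMod 2) else 0) else 0)
        = (if Pred e then (1:ZMod 2) else 0) * χ e := by
    intro e _
    rcases zmod2_em (χ e) with h | h <;> rw [h] <;> split_ifs <;> simp_all
  rw [Finset.sum_congr rfl step1]
  have step2 : ∀ e ∈ Edges d,
      (if Pred e then (1:ZMod 2) else 0) * χ e
        = ∑ p ∈ Pset d, a p *
            (if e ∈ plaqBoundary d p.1 p.2 then (if Pred e then (1:ZMod 2) else 0) else 0) := by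
    intro e _
    rw [hχ, chi_apply, Finset.mul_sum]
    refine Finset.sum_congr rfl (fun p _ => ?_)
    split_ifs <;> ring
  rw [Finset.sum_congr rfl step2, Finset.sum_comm]
  refine Finset.sum_eq_zero (fun p hp => ?_)
  rw [← Finset.mul_sum]
  have hsub : plaqBoundary d p.1 p.2 ⊆ Edges d := by
    rw [mem_Pset] at hp
    exact plaq_subset hp.1.1 hp.1.2 hp.2.1 hp.2.2
  rw [Finset.sum_ite_mem, Finset.inter_eq_right.2 hsub, hplaq p hp, mul_zero]




lemma dir1 (d : ℕ) (a : ℕ × ℕ → ZMod 2) :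
    ∃ g : Finset EdgeT, (IsCycle d g ∧ EvenHColumns d g) ∧
      (∑ p ∈ Pset d, a p • indicatorFn (plaqBoundary d p.1 p.2)) = indicatorFn g := by
  set χ := ∑ p ∈ Pset d, a p • indicatorFn (plaqBoundary d p.1 p.2) with hχ
  refine ⟨(Edges d).filter (fun e => χ e = 1), ⟨⟨Finset.filter_subset _ _, ?_⟩, ?_⟩, ?_⟩
  · intro j hj i hi
    rw [Finset.mem_Icc] at hj
    exact parity_of_rep d a (fun e => Incident (j,i) e)
      (fun p _ => plaq_site_even d j i p.1 p.2 hj.1 hj.2)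
  · intro j hj
    exact parity_of_rep d a (fun e => InHCol j e) (fun p _ => plaq_col_even d j p.1 p.2)
  · funext e
    by_cases he : e ∈ Edges d
    · simp only [indicatorFn, Finset.mem_filter]
      rcases zmod2_em (χ e) with h | h <;> rw [h] <;> split_ifs <;> simp_all
    · rw [hχ, chi_support d a e he]
      simp only [indicatorFn, Finset.mem_filter]
      rw [if_neg (fun hc => he hc.1)]



def Cc (g : Finset EdgeT) (j k : ℕ) : ZMod 2 :=
  ∑ i' ∈ Finset.Icc 1 k, if (Sum.inl (j,i') : EdgeT) ∈ g then 1 else 0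

lemma Cc_zero (g : Finset EdgeT) (j : ℕ) : Cc g j 0 = 0 := by simp [Cc]

lemma Cc_succ (g : Finset EdgeT) (j k : ℕ) :
    Cc g j (k+1) = Cc g j k + (if (Sum.inl (j,k+1) : EdgeT) ∈ g then 1 else 0) := by
  rw [Cc, Cc, Finset.sum_Icc_succ_top (by omega)]

lemma Cc_rec (g : Finset EdgeT) (j b : ℕ) (hb : 1 ≤ b) :
    Cc g j b = Cc g j (b-1) + (if (Sum.inl (j,b) : EdgeT) ∈ g then 1 else 0) := by
  obtain ⟨k, rfl⟩ : ∃ k, b = k + 1 := ⟨b - 1, by omega⟩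
  simpa using Cc_succ g j k

lemma sum_rows (g : Finset EdgeT) (j k : ℕ) :
    (∑ e ∈ g, if (∃ b, e = Sum.inl (j,b) ∧ 1 ≤ b ∧ b ≤ k) then (1:ZMod 2) else 0)
      = Cc g j k := by
  rw [← card_filter_zmod]
  rw [Cc, ← card_filter_zmod]
  congr 1
  rw [show (Finset.Icc 1 k).filter (fun i' => (Sum.inl (j,i') : EdgeT) ∈ g)
      = ((g.filter (fun e => ∃ b, e = Sum.inl (j,b) ∧ 1 ≤ b ∧ b ≤ k)).image
          (fun e => match e with | Sum.inl h => h.2 | Sum.inr v => v.2)) from ?_]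
  · rw [Finset.card_image_of_injOn]
    intro e he e' he' hh
    simp only [Finset.mem_coe, Finset.mem_filter] at he he'
    obtain ⟨-, b₁, rfl, -⟩ := he
    obtain ⟨-, b₂, rfl, -⟩ := he'
    simp_all
  · ext i'
    simp only [Finset.mem_filter, Finset.mem_Icc, Finset.mem_image]
    constructor
    · rintro ⟨hik, hmem⟩
      exact ⟨Sum.inl (j,i'), ⟨hmem, i', rfl, hik⟩, rfl⟩
    · rintro ⟨e, ⟨he, b, rfl, hb⟩, h2⟩
      simp only at h2
      subst h2
      exact ⟨hb, he⟩

lemma Cc_top (d : ℕ) (g : Finset EdgeT) (hsub : g ⊆ Edges d) (j : ℕ)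
    (hcol : Even ((g.filter (fun e => InHCol j e)).card)) : Cc g j d = 0 := by
  have hcongr : (∑ e ∈ g, if (∃ b, e = Sum.inl (j,b) ∧ 1 ≤ b ∧ b ≤ d) then (1:ZMod 2) else 0)
      = ∑ e ∈ g, if InHCol j e then (1:ZMod 2) else 0 := by
    refine Finset.sum_congr rfl (fun e he => ?_)
    rcases e with ⟨c,b⟩ | ⟨c,b⟩
    · have hcb := mem_edges_inl.1 (hsub he)
      have hiff : (∃ b', (Sum.inl (c,b) : EdgeT) = Sum.inl (j,b') ∧ 1 ≤ b' ∧ b' ≤ d)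
          ↔ InHCol j (Sum.inl (c,b)) := by
        simp only [Sum.inl.injEq, Prod.mk.injEq, InHCol]
        constructor
        · rintro ⟨b', ⟨hc, rfl⟩, -⟩; exact hc
        · intro hc; exact ⟨b, ⟨hc, rfl⟩, hcb.2⟩
      exact if_congr hiff rfl rfl
    · simp [InHCol]
  rw [← sum_rows, hcongr, ← card_filter_zmod]
  exact (even_iff_zmod _).1 hcol



lemma zmod2_solve (x y z : ZMod 2) (h : x + y + z = 0) : x + y = z := by
  revert x y z; decide

lemma Cc_vert (d : ℕ) (g : Finset EdgeT) (hsub : g ⊆ Edges d)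
    (hcyc : ∀ j ∈ Finset.Icc 1 (d - 1), ∀ i ∈ Finset.Icc 1 d,
      Even (g.filter (fun e => Incident (j, i) e)).card)
    (j k : ℕ) (hj : 1 ≤ j) (hjd : j ≤ d - 1) (hk : 1 ≤ k) (hkd : k ≤ d - 1) :
    Cc g j k + Cc g (j+1) k = (if (Sum.inr (j,k) : EdgeT) ∈ g then (1:ZMod 2) else 0) := by
  have h0 : (∑ i' ∈ Finset.Icc 1 k, ∑ e ∈ g,
      if Incident (j,i') e then (1:ZMod 2) else 0) = 0 := by
    refine Finset.sum_eq_zero (fun i' hi' => ?_)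
    rw [Finset.mem_Icc] at hi'
    rw [← card_filter_zmod]
    exact (even_iff_zmod _).1
      (hcyc j (Finset.mem_Icc.2 ⟨hj, hjd⟩) i' (Finset.mem_Icc.2 ⟨hi'.1, by omega⟩))
  rw [Finset.sum_comm] at h0
  have hw : ∀ e ∈ g, (∑ i' ∈ Finset.Icc 1 k, if Incident (j,i') e then (1:ZMod 2) else 0)
      = (if (∃ b, e = Sum.inl (j,b) ∧ 1 ≤ b ∧ b ≤ k) then (1:ZMod 2) else 0)
        + (if (∃ b, e = Sum.inl (j+1,b) ∧ 1 ≤ b ∧ b ≤ k) then (1:ZMod 2) else 0)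
        + (if e = Sum.inr (j,k) then (1:ZMod 2) else 0) := by
    intro e he
    rcases e with ⟨c,b⟩ | ⟨c,b⟩
    · have key : ∀ i' : ℕ, (if Incident (j,i') (Sum.inl (c,b)) then (1:ZMod 2) else 0)
          = (if i' = b then ((if c = j then (1:ZMod 2) else 0)
              + (if c = j+1 then (1:ZMod 2) else 0)) else 0) := by
        intro i'
        unfold Incident
        split_ifs <;> first | rfl | decide | omega | (exfalso; omega) | norm_num | simp_all
      rw [Finset.sum_congr rfl (fun i' _ => key i'), Finset.sum_ite_eq' (Finset.Icc 1 k) b]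
      simp only [Sum.inl.injEq, Prod.mk.injEq, Finset.mem_Icc, reduceCtorEq, if_false, add_zero]
      have h1 : (∃ b', (c = j ∧ b = b') ∧ 1 ≤ b' ∧ b' ≤ k) ↔ (c = j ∧ 1 ≤ b ∧ b ≤ k) := by
        constructor
        · rintro ⟨b', ⟨hc, rfl⟩, hb⟩; exact ⟨hc, hb⟩
        · rintro ⟨hc, hb⟩; exact ⟨b, ⟨hc, rfl⟩, hb⟩
      have h2 : (∃ b', (c = j + 1 ∧ b = b') ∧ 1 ≤ b' ∧ b' ≤ k) ↔ (c = j+1 ∧ 1 ≤ b ∧ b ≤ k) := by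
        constructor
        · rintro ⟨b', ⟨hc, rfl⟩, hb⟩; exact ⟨hc, hb⟩
        · rintro ⟨hc, hb⟩; exact ⟨b, ⟨hc, rfl⟩, hb⟩
      rw [if_congr h1 rfl rfl, if_congr h2 rfl rfl]
      split_ifs <;> first | rfl | decide | omega | (exfalso; omega) | norm_num | simp_all
    · have hcb := mem_edges_inr.1 (hsub he)
      have key : ∀ i' : ℕ, (if Incident (j,i') (Sum.inr (c,b)) then (1:ZMod 2) else 0)
          = (if i' = b + 1 then (if c = j then (1:ZMod 2) else 0) else 0)
            + (if i' = b then (if c = j then (1:ZMod 2) else 0) else 0) := by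
        intro i'
        unfold Incident
        split_ifs <;> first | rfl | decide | omega | (exfalso; omega) | norm_num | simp_all
      rw [Finset.sum_congr rfl (fun i' _ => key i'), Finset.sum_add_distrib,
        Finset.sum_ite_eq' (Finset.Icc 1 k) (b+1), Finset.sum_ite_eq' (Finset.Icc 1 k) b]
      simp only [Sum.inr.injEq, Prod.mk.injEq, Finset.mem_Icc, reduceCtorEq, if_false, zero_add]
      have hb1 : 1 ≤ b := hcb.2.1
      split_ifs <;> first | rfl | decide | omega | (exfalso; omega) | norm_num | simp_all
  rw [Finset.sum_congr rfl hw, Finset.sum_add_distrib, Finset.sum_add_distrib,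
    sum_rows, sum_rows, Finset.sum_ite_eq' g (Sum.inr (j,k)) (fun _ => (1:ZMod 2))] at h0
  exact zmod2_solve _ _ _ h0

lemma dir2 (d : ℕ) (hd : 2 ≤ d) (g : Finset EdgeT) (hcyc : IsCycle d g)
    (hcols : EvenHColumns d g) :
    indicatorFn g = ∑ p ∈ Pset d, Cc g p.1 p.2 • indicatorFn (plaqBoundary d p.1 p.2) := by
  obtain ⟨hsub, hsite⟩ := hcyc
  funext e
  rw [show (∑ p ∈ Pset d, Cc g p.1 p.2 • indicatorFn (plaqBoundary d p.1 p.2))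
      = ∑ p ∈ Pset d, (fun q : ℕ × ℕ => Cc g q.1 q.2) p • indicatorFn (plaqBoundary d p.1 p.2)
      from rfl, chi_apply]
  rcases e with ⟨a,b⟩ | ⟨a,b⟩
  · -- horizontal edge
    by_cases hb0 : b = 0
    · subst hb0
      have hz : ∀ p ∈ Pset d, Cc g p.1 p.2 *
          (if (Sum.inl (a,0) : EdgeT) ∈ plaqBoundary d p.1 p.2 then (1:ZMod 2) else 0) = 0 := by
        intro p hp
        rw [mem_Pset] at hp
        rw [if_neg, mul_zero]
        rw [mem_plaq_inl]
        omega
      rw [Finset.sum_congr rfl hz, Finset.sum_const, smul_zero]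
      rw [indicatorFn, if_neg (fun hmem => by have := mem_edges_inl.1 (hsub hmem); omega)]
    · have hb : 1 ≤ b := by omega
      have key : ∀ p : ℕ × ℕ, Cc g p.1 p.2 *
          (if (Sum.inl (a,b) : EdgeT) ∈ plaqBoundary d p.1 p.2 then (1:ZMod 2) else 0)
          = (if p = (a,b) then Cc g a b else 0) + (if p = (a,b-1) then Cc g a (b-1) else 0) := by
        rintro ⟨j',i'⟩
        simp only [mem_plaq_inl, Prod.mk.injEq]
        split_ifs <;> first | (exfalso; omega) | simp_all | (simp_all; omega)
      rw [Finset.sum_congr rfl (fun p _ => key p), Finset.sum_add_distrib,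
        Finset.sum_ite_eq' (Pset d) (a,b) (fun _ => Cc g a b),
        Finset.sum_ite_eq' (Pset d) (a,b-1) (fun _ => Cc g a (b-1))]
      simp only [mem_Pset]
      by_cases ha : 1 ≤ a ∧ a ≤ d
      · by_cases hbd : b ≤ d
        · have hrec := Cc_rec g a b hb
          by_cases h1 : b ≤ d - 1
          · rw [if_pos (by omega)]
            by_cases h2 : 2 ≤ b
            · rw [if_pos (by omega), hrec]
              simp only [indicatorFn]
              have hx : ∀ x y : ZMod 2, y = (x + y) + x := by decide
              exact hx _ _
            · have hb1 : b = 1 := by omega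
              subst hb1
              rw [if_neg (by omega), add_zero, hrec, show (1:ℕ)-1 = 0 from rfl, Cc_zero,
                zero_add]
              simp only [indicatorFn]
          · rw [if_neg (by omega), if_pos (by omega), zero_add]
            have htop : Cc g a b = 0 := by
              rw [show b = d from by omega]
              exact Cc_top d g hsub a (hcols a (Finset.mem_Icc.2 ha))
            rw [htop] at hrec
            simp only [indicatorFn]
            have hx : ∀ x y : ZMod 2, 0 = x + y → y = x := by decide
            exact hx _ _ hrec
        · rw [if_neg (by omega), if_neg (by omega), indicatorFn,
            if_neg (fun hmem => by have := mem_edges_inl.1 (hsub hmem); omega)]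
          ring
      · rw [if_neg (by omega), if_neg (by omega), indicatorFn,
          if_neg (fun hmem => by have := mem_edges_inl.1 (hsub hmem); omega)]
        ring
  · -- vertical edge
    by_cases hv : 1 ≤ a ∧ a ≤ d - 1 ∧ 1 ≤ b ∧ b ≤ d - 1
    · have key : ∀ p : ℕ × ℕ, Cc g p.1 p.2 *
          (if (Sum.inr (a,b) : EdgeT) ∈ plaqBoundary d p.1 p.2 then (1:ZMod 2) else 0)
          = (if p = (a+1,b) then Cc g (a+1) b else 0) + (if p = (a,b) then Cc g a b else 0) := by
        rintro ⟨j',i'⟩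
        simp only [mem_plaq_inr, Prod.mk.injEq]
        split_ifs <;> first | (exfalso; omega) | simp_all | (simp_all; omega)
      rw [Finset.sum_congr rfl (fun p _ => key p), Finset.sum_add_distrib,
        Finset.sum_ite_eq' (Pset d) (a+1,b) (fun _ => Cc g (a+1) b),
        Finset.sum_ite_eq' (Pset d) (a,b) (fun _ => Cc g a b)]
      rw [if_pos (mem_Pset.2 (by constructor <;> constructor <;> omega)),
        if_pos (mem_Pset.2 (by constructor <;> constructor <;> omega))]
      rw [add_comm, Cc_vert d g hsub hsite a b hv.1 hv.2.1 hv.2.2.1 hv.2.2.2, indicatorFn]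
    · have hz : ∀ p ∈ Pset d, Cc g p.1 p.2 *
          (if (Sum.inr (a,b) : EdgeT) ∈ plaqBoundary d p.1 p.2 then (1:ZMod 2) else 0) = 0 := by
        intro p hp
        rw [mem_Pset] at hp
        rw [if_neg, mul_zero]
        rw [mem_plaq_inr]
        omega
      rw [Finset.sum_congr rfl hz, Finset.sum_const, smul_zero, indicatorFn,
        if_neg (fun hmem => by have := mem_edges_inr.1 (hsub hmem); omega)]

end SCAux

/-- The collection `𝒢^X` of all sums (symmetric differences) of plaquette
boundaries — i.e. the `ZMod 2` span of the indicator vectors of the plaquette boundaries —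
is exactly the set of cycles `g ⊆ H ∪ V` such that `|g ∩ H^j|` is even for every
`j = 1,…,d`. -/


theorem span_plaquettes_eq_even_cycles (d : ℕ) (hd : 2 ≤ d) :
    (Submodule.span (ZMod 2)
        {χ : EdgeT → ZMod 2 | ∃ j ∈ Finset.Icc 1 d, ∃ i ∈ Finset.Icc 1 (d - 1),
          χ = indicatorFn (plaqBoundary d j i)} : Set (EdgeT → ZMod 2)) =
      {χ : EdgeT → ZMod 2 | ∃ g : Finset EdgeT,
        (IsCycle d g ∧ EvenHColumns d g) ∧ χ = indicatorFn g} := by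
  ext χ
  simp only [SetLike.mem_coe, Set.mem_setOf_eq]
  rw [SCAux.mem_span_iff]
  constructor
  · rintro ⟨a, rfl⟩
    exact SCAux.dir1 d a
  · rintro ⟨g, ⟨hcyc, hcols⟩, rfl⟩
    exact ⟨fun p => SCAux.Cc g p.1 p.2, SCAux.dir2 d hd g hcyc hcols⟩
end

section
/- Let d ≥ 2 and let w_1,…,w_{d−1} be real numbers. On (ℂ²)^{⊗d} define P = Π_{i=1}^{d−1} (I + w_i X_i X_{i+1}), where X_i is the Pauli matrix σ_x = !![0,1;1,0] acting on the i-th tensor factor (the factors of the product pairwise commute, so the order is irrelevant). For computational basis vectors labeled by x, y ∈ {0,1}^d, let z_i = (Σ_{a=1}^{i} (x_a + y_a)) mod 2 for i = 1,…,d−1. Then: if Σ_{a=1}^{d} (x_a + y_a) is even, the matrix element ⟨x| P |y⟩ equals Π_{i=1}^{d−1} w_i^{z_i} (with the convention w^0 = 1); and if Σ_{a=1}^{d} (x_a + y_a) is odd, then ⟨x| P |y⟩ = 0. -/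
open Matrix

def flipAt {d : ℕ} (k : ℕ) (z : Fin d → Fin 2) : Fin d → Fin 2 :=
  fun a => if (a : ℕ) = k then z a + 1 else z a

-- Fin 2 arithmetic facts
lemma fin2_L1 (u v : Fin 2) : ((u:ℕ) + (v:ℕ)) % 2 = 0 ↔ u = v := by revert u v; decide
lemma fin2_L2 (u v : Fin 2) : ((u:ℕ) + (v:ℕ)) % 2 = 1 ↔ u = v + 1 := by revert u v; decide
lemma fin2_L3 (u v : Fin 2) : ((u:ℕ) + ((v+1 : Fin 2):ℕ)) % 2 = ((u:ℕ) + (v:ℕ) + 1) % 2 := by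
  revert u v
  decide

-- sum splitting
lemma sum_split {d : ℕ} (f : Fin d → ℕ) (k : ℕ) (hk : k < d) :
    (∑ a : Fin d, if (a:ℕ) ≤ k then f a else 0)
      = (∑ a : Fin d, if (a:ℕ) < k then f a else 0) + f ⟨k, hk⟩ := by
  have h : ∀ a : Fin d, (if (a:ℕ) ≤ k then f a else 0)
      = (if (a:ℕ) < k then f a else 0) + (if a = ⟨k, hk⟩ then f a else 0) := by
    intro a
    by_cases h1 : (a:ℕ) < k
    · have h2 : (a:ℕ) ≤ k := le_of_lt h1
      have h3 : a ≠ ⟨k, hk⟩ := by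
        intro e; simp [Fin.ext_iff] at e; omega
      simp [h1, h2, h3]
    · by_cases h4 : (a:ℕ) = k
      · have h5 : a = ⟨k, hk⟩ := Fin.ext h4
        simp [h1, h4, h5, Nat.le_of_eq]
      · have h6 : ¬ (a:ℕ) ≤ k := by omega
        have h7 : a ≠ ⟨k, hk⟩ := by
          intro e; simp [Fin.ext_iff] at e; omega
        simp [h1, h6, h7]
  simp_rw [h]
  rw [Finset.sum_add_distrib, Finset.sum_ite_eq' Finset.univ (⟨k, hk⟩ : Fin d) f]
  simp

lemma flip2_apply {d : ℕ} (k : ℕ) (y : Fin d → Fin 2) (a : Fin d) :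
    flipAt k (flipAt (k+1) y) a = if (a:ℕ) = k ∨ (a:ℕ) = k+1 then y a + 1 else y a := by
  simp only [flipAt]
  by_cases h1 : (a:ℕ) = k
  · simp [h1, (by omega : ¬ (k = k+1))]
  · by_cases h2 : (a:ℕ) = k+1 <;> simp [h1, h2]

lemma sigmaX_self (b : Fin 2) : sigmaX b b = 0 := by
  fin_cases b <;> simp [sigmaX]

lemma sigmaX_succ (b : Fin 2) : sigmaX b (b + 1) = 1 := by
  fin_cases b <;> simp [sigmaX]

lemma fin2_ne_succ {u z : Fin 2} (h : u ≠ z + 1) : u = z := by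
  revert u z; decide

lemma pauliX_apply {d : ℕ} (k : ℕ) (z u : Fin d → Fin 2) :
    pauliAtN d sigmaX k z u = if u = flipAt k z then 1 else 0 := by
  unfold pauliAtN
  split
  · next h =>
    subst h
    apply Finset.prod_eq_one
    intro i _
    by_cases hi : (i : ℕ) = k <;> simp [flipAt, hi, sigmaX_succ]
  · next h =>
    have : ∃ a, u a ≠ flipAt k z a := by
      by_contra hc
      push_neg at hc
      exact h (funext hc)
    obtain ⟨a, ha⟩ := this
    apply Finset.prod_eq_zero (Finset.mem_univ a)
    by_cases hi : (a : ℕ) = k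
    · simp only [flipAt, if_pos hi] at ha
      simp [hi, fin2_ne_succ ha, sigmaX_self]
    · simp only [flipAt, if_neg hi] at ha
      simp [hi, ha, Ne.symm ha]

lemma flipAt_flipAt {d : ℕ} (k : ℕ) (z : Fin d → Fin 2) : flipAt k (flipAt k z) = z := by
  funext a
  simp only [flipAt]
  by_cases hi : (a : ℕ) = k <;> simp [hi]
  · have : ∀ b : Fin 2, b + 1 + 1 = b := by decide
    exact this _

lemma XX_apply {d : ℕ} (k l : ℕ) (z y : Fin d → Fin 2) :
    (pauliAtN d sigmaX k * pauliAtN d sigmaX l) z y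
      = if z = flipAt k (flipAt l y) then 1 else 0 := by
  rw [mul_apply]
  simp only [pauliX_apply]
  simp only [ite_mul, one_mul, zero_mul]
  rw [Finset.sum_ite_eq' Finset.univ (flipAt k z)
    (fun u => if y = flipAt l u then 1 else (0:ℂ))]
  simp only [Finset.mem_univ, if_true]
  have : y = flipAt l (flipAt k z) ↔ z = flipAt k (flipAt l y) := by
    constructor
    · intro h
      rw [h, flipAt_flipAt, flipAt_flipAt]
    · intro h
      rw [h, flipAt_flipAt, flipAt_flipAt]
  simp [this]

lemma main_ind {d : ℕ} (w : ℕ → ℝ) (x : Fin d → Fin 2) :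
    ∀ k, k < d → ∀ y : Fin d → Fin 2,
    (((List.range k).map (fun i =>
        (1 : Matrix (Fin d → Fin 2) (Fin d → Fin 2) ℂ) +
          (w (i + 1) : ℂ) • (pauliAtN d sigmaX i * pauliAtN d sigmaX (i + 1)))).prod) x y =
      if (∀ a : Fin d, k < (a : ℕ) → x a = y a) ∧
          (∑ a : Fin d, if (a : ℕ) ≤ k then (x a : ℕ) + (y a : ℕ) else 0) % 2 = 0 then
        ∏ i ∈ Finset.range k,
          ((w (i + 1) : ℂ)) ^
            ((∑ a : Fin d, if (a : ℕ) ≤ i then (x a : ℕ) + (y a : ℕ) else 0) % 2)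
      else 0 := by
  intro k
  induction k with
  | zero =>
    intro hk y
    have hd0 : 0 < d := hk
    simp only [List.range_zero, List.map_nil, List.prod_nil, Finset.range_zero,
      Finset.prod_empty]
    rw [Matrix.one_apply]
    have hsum : (∑ a : Fin d, if (a : ℕ) ≤ 0 then (x a : ℕ) + (y a : ℕ) else 0)
        = (x ⟨0, hd0⟩ : ℕ) + (y ⟨0, hd0⟩ : ℕ) := by
      rw [sum_split (fun a => (x a : ℕ) + (y a : ℕ)) 0 hd0]
      simp
    have hiff : (x = y) ↔ ((∀ a : Fin d, 0 < (a : ℕ) → x a = y a) ∧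
        (∑ a : Fin d, if (a : ℕ) ≤ 0 then (x a : ℕ) + (y a : ℕ) else 0) % 2 = 0) := by
      rw [hsum]
      constructor
      · intro h
        subst h
        exact ⟨fun _ _ => rfl, (fin2_L1 _ _).mpr rfl⟩
      · rintro ⟨h1, h2⟩
        funext a
        by_cases ha : 0 < (a : ℕ)
        · exact h1 a ha
        · have : a = ⟨0, hd0⟩ := Fin.ext (show (a:ℕ) = 0 by omega)
          rw [this]
          exact (fin2_L1 _ _).mp h2
    by_cases h : x = y
    · rw [if_pos h, if_pos (hiff.mp h)]
    · rw [if_neg h, if_neg (fun hc => h (hiff.mpr hc))]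
  | succ k ih =>
    intro hk1 y
    have hkd : k < d := by omega
    set y' := flipAt k (flipAt (k+1) y) with hy'
    -- unfold the last factor of the list product
    rw [List.range_succ, List.map_append, List.prod_append, List.map_cons, List.map_nil,
      List.prod_cons, List.prod_nil, mul_one, Matrix.mul_apply]
    -- notation for the partial product
    set P := (((List.range k).map (fun i =>
        (1 : Matrix (Fin d → Fin 2) (Fin d → Fin 2) ℂ) +
          (w (i + 1) : ℂ) • (pauliAtN d sigmaX i * pauliAtN d sigmaX (i + 1)))).prod) with hP
    have hterm : ∀ z : Fin d → Fin 2,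
        P x z * ((1 : Matrix (Fin d → Fin 2) (Fin d → Fin 2) ℂ) +
          (w (k + 1) : ℂ) • (pauliAtN d sigmaX k * pauliAtN d sigmaX (k + 1))) z y
        = (if z = y then P x z else 0) + (if z = y' then (w (k+1) : ℂ) * P x z else 0) := by
      intro z
      rw [Matrix.add_apply, Matrix.smul_apply, Matrix.one_apply, XX_apply, ← hy']
      by_cases hz1 : z = y
      · subst hz1
        by_cases hz2 : z = y' <;> simp [hz2] <;> ring
      · by_cases hz2 : z = y'
        · subst hz2
          simp [hz1]
          ring
        · simp [hz1, hz2]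
    simp_rw [hterm]
    rw [Finset.sum_add_distrib,
      Finset.sum_ite_eq' Finset.univ y (fun z => P x z),
      Finset.sum_ite_eq' Finset.univ y' (fun z => (w (k+1) : ℂ) * P x z)]
    simp only [Finset.mem_univ, if_true]
    rw [ih hkd y, ih hkd y']
    -- basic facts about y'
    have hy'lt : ∀ a : Fin d, (a : ℕ) < k → y' a = y a := by
      intro a ha
      rw [hy', flip2_apply]
      have : ¬ ((a:ℕ) = k ∨ (a:ℕ) = k+1) := by omega
      rw [if_neg this]
    have hy'gt : ∀ a : Fin d, k + 1 < (a : ℕ) → y' a = y a := by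
      intro a ha
      rw [hy', flip2_apply]
      have : ¬ ((a:ℕ) = k ∨ (a:ℕ) = k+1) := by omega
      rw [if_neg this]
    have hy'k : y' ⟨k, hkd⟩ = y ⟨k, hkd⟩ + 1 := by
      rw [hy', flip2_apply]; simp
    have hy'k1 : y' ⟨k+1, hk1⟩ = y ⟨k+1, hk1⟩ + 1 := by
      rw [hy', flip2_apply]; simp
    -- sums
    have hSi : ∀ i, i < k →
        (∑ a : Fin d, if (a : ℕ) ≤ i then (x a : ℕ) + (y' a : ℕ) else 0)
          = (∑ a : Fin d, if (a : ℕ) ≤ i then (x a : ℕ) + (y a : ℕ) else 0) := by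
      intro i hi
      apply Finset.sum_congr rfl
      intro a _
      by_cases ha : (a : ℕ) ≤ i
      · rw [hy'lt a (by omega)]
      · simp [ha]
    have hSltk : (∑ a : Fin d, if (a : ℕ) < k then (x a : ℕ) + (y' a : ℕ) else 0)
          = (∑ a : Fin d, if (a : ℕ) < k then (x a : ℕ) + (y a : ℕ) else 0) := by
      apply Finset.sum_congr rfl
      intro a _
      by_cases ha : (a : ℕ) < k
      · rw [hy'lt a ha]
      · simp [ha]
    have hSk' : (∑ a : Fin d, if (a : ℕ) ≤ k then (x a : ℕ) + (y' a : ℕ) else 0) % 2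
        = ((∑ a : Fin d, if (a : ℕ) ≤ k then (x a : ℕ) + (y a : ℕ) else 0) + 1) % 2 := by
      rw [sum_split (fun a => (x a : ℕ) + (y' a : ℕ)) k hkd,
        sum_split (fun a => (x a : ℕ) + (y a : ℕ)) k hkd, hSltk, hy'k]
      have := fin2_L3 (x ⟨k, hkd⟩) (y ⟨k, hkd⟩)
      omega
    have hSk1 : (∑ a : Fin d, if (a : ℕ) ≤ k + 1 then (x a : ℕ) + (y a : ℕ) else 0)
        = (∑ a : Fin d, if (a : ℕ) ≤ k then (x a : ℕ) + (y a : ℕ) else 0)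
          + ((x ⟨k+1, hk1⟩ : ℕ) + (y ⟨k+1, hk1⟩ : ℕ)) := by
      rw [sum_split (fun a => (x a : ℕ) + (y a : ℕ)) (k+1) hk1]
      congr 1
      apply Finset.sum_congr rfl
      intro a _
      simp [Nat.lt_succ_iff]
    -- abbreviations
    set Sk := (∑ a : Fin d, if (a : ℕ) ≤ k then (x a : ℕ) + (y a : ℕ) else 0) with hSkdef
    -- condition equivalences
    have hA : ((∀ a : Fin d, k < (a : ℕ) → x a = y a) ∧ Sk % 2 = 0)
        ↔ (((∀ a : Fin d, k + 1 < (a : ℕ) → x a = y a) ∧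
            (∑ a : Fin d, if (a : ℕ) ≤ k + 1 then (x a : ℕ) + (y a : ℕ) else 0) % 2 = 0)
          ∧ Sk % 2 = 0) := by
      constructor
      · rintro ⟨h1, h2⟩
        refine ⟨⟨fun a ha => h1 a (by omega), ?_⟩, h2⟩
        rw [hSk1]
        have : ((x ⟨k+1, hk1⟩ : ℕ) + (y ⟨k+1, hk1⟩ : ℕ)) % 2 = 0 :=
          (fin2_L1 _ _).mpr (h1 ⟨k+1, hk1⟩ (by simp))
        omega
      · rintro ⟨⟨h1, h2⟩, h3⟩
        refine ⟨fun a ha => ?_, h3⟩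
        by_cases hcase : k + 1 < (a : ℕ)
        · exact h1 a hcase
        · have hak : (a : ℕ) = k + 1 := by omega
          have : a = ⟨k+1, hk1⟩ := Fin.ext hak
          rw [this]
          rw [hSk1] at h2
          exact (fin2_L1 _ _).mp (by omega)
    have hB : ((∀ a : Fin d, k < (a : ℕ) → x a = y' a) ∧
          (∑ a : Fin d, if (a : ℕ) ≤ k then (x a : ℕ) + (y' a : ℕ) else 0) % 2 = 0)
        ↔ (((∀ a : Fin d, k + 1 < (a : ℕ) → x a = y a) ∧
            (∑ a : Fin d, if (a : ℕ) ≤ k + 1 then (x a : ℕ) + (y a : ℕ) else 0) % 2 = 0)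
          ∧ Sk % 2 = 1) := by
      rw [hSk']
      constructor
      · rintro ⟨h1, h2⟩
        have hpar : Sk % 2 = 1 := by omega
        refine ⟨⟨fun a ha => by rw [h1 a (by omega), hy'gt a ha], ?_⟩, hpar⟩
        rw [hSk1]
        have hx1 : x ⟨k+1, hk1⟩ = y ⟨k+1, hk1⟩ + 1 := by
          have := h1 ⟨k+1, hk1⟩ (by simp)
          rw [this, hy'k1]
        have : ((x ⟨k+1, hk1⟩ : ℕ) + (y ⟨k+1, hk1⟩ : ℕ)) % 2 = 1 := (fin2_L2 _ _).mpr hx1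
        omega
      · rintro ⟨⟨h1, h2⟩, h3⟩
        refine ⟨fun a ha => ?_, by omega⟩
        by_cases hcase : k + 1 < (a : ℕ)
        · rw [hy'gt a hcase]; exact h1 a hcase
        · have hak : (a : ℕ) = k + 1 := by omega
          have haeq : a = ⟨k+1, hk1⟩ := Fin.ext hak
          rw [haeq, hy'k1]
          rw [hSk1] at h2
          exact (fin2_L2 _ _).mp (by omega)
    -- value equality
    have hVal : (∏ i ∈ Finset.range k, ((w (i + 1) : ℂ)) ^
            ((∑ a : Fin d, if (a : ℕ) ≤ i then (x a : ℕ) + (y' a : ℕ) else 0) % 2))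
        = ∏ i ∈ Finset.range k, ((w (i + 1) : ℂ)) ^
            ((∑ a : Fin d, if (a : ℕ) ≤ i then (x a : ℕ) + (y a : ℕ) else 0) % 2) := by
      apply Finset.prod_congr rfl
      intro i hi
      rw [hSi i (Finset.mem_range.mp hi)]
    -- case analysis
    by_cases hC : ((∀ a : Fin d, k + 1 < (a : ℕ) → x a = y a) ∧
        (∑ a : Fin d, if (a : ℕ) ≤ k + 1 then (x a : ℕ) + (y a : ℕ) else 0) % 2 = 0)
    · by_cases hpar : Sk % 2 = 0
      · rw [if_pos (hA.mpr ⟨hC, hpar⟩), if_neg (fun hb => by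
          have := (hB.mp hb).2; omega), if_pos hC]
        rw [Finset.prod_range_succ, ← hSkdef, hpar, pow_zero, mul_one, mul_zero, add_zero]
      · have hpar1 : Sk % 2 = 1 := by omega
        rw [if_neg (fun ha => hpar (hA.mp ha).2), if_pos (hB.mpr ⟨hC, hpar1⟩), if_pos hC]
        rw [hVal, Finset.prod_range_succ, ← hSkdef, hpar1, pow_one, zero_add]
        ring
    · rw [if_neg (fun ha => hC (hA.mp ha).1), if_neg (fun hb => hC (hB.mp hb).1), if_neg hC]
      simp


/-- Matrix elements of `P = ∏_{i=1}^{d−1} (I + w_i X_i X_{i+1})` (the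
factors pairwise commute, so the order is irrelevant; here they are multiplied in the order
`i = 1,…,d−1`).  For basis vectors `x, y ∈ {0,1}^d`, letting `z_i` be the parity of
`∑_{a=1}^{i} (x_a + y_a)`: if `∑_{a=1}^{d} (x_a + y_a)` is even then
`⟨x|P|y⟩ = ∏_{i=1}^{d−1} w_i^{z_i}`, and otherwise `⟨x|P|y⟩ = 0`. -/
theorem matchgate_product_entry (d : ℕ) (hd : 2 ≤ d) (w : ℕ → ℝ) (x y : Fin d → Fin 2) :
    (((List.range (d - 1)).map (fun i =>
        (1 : Matrix (Fin d → Fin 2) (Fin d → Fin 2) ℂ) +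
          (w (i + 1) : ℂ) • (pauliAtN d sigmaX i * pauliAtN d sigmaX (i + 1)))).prod) x y =
      if Even (∑ a : Fin d, ((x a : ℕ) + (y a : ℕ))) then
        ∏ i ∈ Finset.range (d - 1),
          ((w (i + 1) : ℂ)) ^
            ((∑ a : Fin d, if (a : ℕ) ≤ i then (x a : ℕ) + (y a : ℕ) else 0) % 2)
      else 0 := by
  have hk := main_ind w x (d - 1) (by omega) y
  rw [hk]
  have h2 : (∑ a : Fin d, if (a : ℕ) ≤ d - 1 then (x a : ℕ) + (y a : ℕ) else 0)
      = ∑ a : Fin d, ((x a : ℕ) + (y a : ℕ)) := by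
    apply Finset.sum_congr rfl
    intro a _
    have := a.isLt
    rw [if_pos (by omega)]
  rw [h2]
  have hiff : ((∀ a : Fin d, d - 1 < (a : ℕ) → x a = y a) ∧
      (∑ a : Fin d, ((x a : ℕ) + (y a : ℕ))) % 2 = 0)
      ↔ Even (∑ a : Fin d, ((x a : ℕ) + (y a : ℕ))) := by
    rw [Nat.even_iff]
    constructor
    · exact fun h => h.2
    · intro h
      refine ⟨fun a ha => ?_, h⟩
      have := a.isLt
      omega
  rw [if_congr hiff rfl rfl]
end
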